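/- arXiv:2601.05030 — 7 statements merged into one kernel-verified Lean document; each statement's English description precedes it below -/
import Mathlib

section
/- Let φ : [a,b] → ℝ be twice continuously differentiable and let X be a random variable taking values in [a,b] with mean μ = E[X]. Then E[φ(X)] − φ(μ) = ∫_a^b φ''(t) · (1/2)·( E[|X − t|] − |μ − t| ) dt. -/
open MeasureTheory ProbabilityTheory
open scoped ProbabilityTheory

private theorem taylor_green_aux (a b : ℝ)
    (φ φ' φ'' : ℝ → ℝ)
    (hderiv1 : ∀ x ∈ Set.Icc a b, HasDerivWithinAt φ (φ' x) (Set.Icc a b) x)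
    (hderiv2 : ∀ x ∈ Set.Icc a b, HasDerivWithinAt φ' (φ'' x) (Set.Icc a b) x)
    (hcont : ContinuousOn φ'' (Set.Icc a b))
    (x : ℝ) (hx : x ∈ Set.Icc a b) :
    φ x = φ a + φ' a * (x - a) + ∫ t in a..b, max (x - t) 0 * φ'' t := by
  have hφc : ContinuousOn φ (Set.Icc a b) := fun t ht => (hderiv1 t ht).continuousWithinAt
  have hφ'c : ContinuousOn φ' (Set.Icc a b) := fun t ht => (hderiv2 t ht).continuousWithinAt
  have hsub : Set.Icc a x ⊆ Set.Icc a b := Set.Icc_subset_Icc le_rfl hx.2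
  have hint1 : IntervalIntegrable (fun t => (x - t) * φ'' t) volume a x := by
    apply ContinuousOn.intervalIntegrable
    apply ContinuousOn.mul (by fun_prop)
    apply hcont.mono
    rw [Set.uIcc_of_le hx.1]; exact hsub
  have key : ∫ t in a..x, (x - t) * φ'' t
      = (φ x + (x - x) * φ' x) - (φ a + (x - a) * φ' a) := by
    refine intervalIntegral.integral_eq_sub_of_hasDeriv_right_of_le
      (f := fun t => φ t + (x - t) * φ' t) hx.1 ?_ ?_ hint1
    · exact (hφc.mono hsub).add (ContinuousOn.mul (by fun_prop) (hφ'c.mono hsub))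
    · intro t ht
      have htI : t ∈ Set.Icc a b := hsub (Set.Ioo_subset_Icc_self ht)
      have hmem : Set.Icc a b ∈ nhds t := by
        apply Icc_mem_nhds ht.1 (lt_of_lt_of_le ht.2 hx.2)
      have h1 : HasDerivAt φ (φ' t) t := (hderiv1 t htI).hasDerivAt hmem
      have h2 : HasDerivAt φ' (φ'' t) t := (hderiv2 t htI).hasDerivAt hmem
      have h3 : HasDerivAt (fun s => (x - s) * φ' s) ((-1) * φ' t + (x - t) * φ'' t) t :=
        HasDerivAt.mul ((hasDerivAt_id t).const_sub x) h2
      have h4 := h1.add h3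
      have heq : φ' t + ((-1) * φ' t + (x - t) * φ'' t) = (x - t) * φ'' t := by ring
      rw [heq] at h4
      exact h4.hasDerivWithinAt
  have hgc : ContinuousOn (fun t => max (x - t) 0 * φ'' t) (Set.Icc a b) :=
    ContinuousOn.mul (by fun_prop) hcont
  have hi1 : IntervalIntegrable (fun t => max (x - t) 0 * φ'' t) volume a x :=
    (hgc.mono (by rw [Set.uIcc_of_le hx.1]; exact hsub)).intervalIntegrable
  have hi2 : IntervalIntegrable (fun t => max (x - t) 0 * φ'' t) volume x b :=
    (hgc.mono (by rw [Set.uIcc_of_le hx.2]; exact Set.Icc_subset_Icc hx.1 le_rfl)).intervalIntegrable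
  have hsplit : ∫ t in a..b, max (x - t) 0 * φ'' t
      = (∫ t in a..x, max (x - t) 0 * φ'' t) + ∫ t in x..b, max (x - t) 0 * φ'' t :=
    (intervalIntegral.integral_add_adjacent_intervals hi1 hi2).symm
  have he1 : (∫ t in a..x, max (x - t) 0 * φ'' t) = ∫ t in a..x, (x - t) * φ'' t := by
    apply intervalIntegral.integral_congr
    intro t ht
    rw [Set.uIcc_of_le hx.1] at ht
    simp [max_eq_left (sub_nonneg.mpr ht.2)]
  have he2 : (∫ t in x..b, max (x - t) 0 * φ'' t) = 0 := by
    rw [intervalIntegral.integral_congr (g := fun _ => (0:ℝ)) ?_]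
    · simp
    · intro t ht
      rw [Set.uIcc_of_le hx.2] at ht
      simp [max_eq_right (sub_nonpos.mpr ht.1)]
  rw [hsplit, he1, he2, key]
  ring

/-- **Green-function representation of the Jensen gap on `[a,b]`.**
For `φ` twice continuously differentiable on `[a,b]` and `X` a random variable taking
values in `[a,b]` with mean `μ`,
`E[φ(X)] − φ(μ) = ∫_a^b φ''(t) · (1/2)·(E[|X − t|] − |μ − t|) dt`. -/
theorem green_function_representation
    {Ω : Type*} [MeasureSpace Ω] [IsProbabilityMeasure (ℙ : Measure Ω)]
    (a b : ℝ) (hab : a ≤ b)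
    (φ φ' φ'' : ℝ → ℝ)
    (hderiv1 : ∀ x ∈ Set.Icc a b, HasDerivWithinAt φ (φ' x) (Set.Icc a b) x)
    (hderiv2 : ∀ x ∈ Set.Icc a b, HasDerivWithinAt φ' (φ'' x) (Set.Icc a b) x)
    (hcont : ContinuousOn φ'' (Set.Icc a b))
    (X : Ω → ℝ) (hXI : ∀ ω, X ω ∈ Set.Icc a b)
    (hXint : Integrable X) (hφXint : Integrable (fun ω => φ (X ω)))
    (μ : ℝ) (hμ : μ = ∫ ω, X ω) :
    (∫ ω, φ (X ω)) - φ μ =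
      ∫ t in a..b, φ'' t * (1 / 2 * ((∫ ω, |X ω - t|) - |μ - t|)) := by
  have hμI : μ ∈ Set.Icc a b := by
    constructor
    · rw [hμ]
      calc a = ∫ _ω : Ω, a := by simp
        _ ≤ ∫ ω, X ω := integral_mono (integrable_const a) hXint fun ω => (hXI ω).1
    · rw [hμ]
      calc (∫ ω, X ω) ≤ ∫ _ω : Ω, b :=
            integral_mono hXint (integrable_const b) fun ω => (hXI ω).2
        _ = b := by simp
  -- pointwise Taylor identity
  have hkey : ∀ x ∈ Set.Icc a b,
      φ x = φ a + φ' a * (x - a) + ∫ t in Set.Ioc a b, max (x - t) 0 * φ'' t := by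
    intro x hx
    rw [← intervalIntegral.integral_of_le hab]
    exact taylor_green_aux a b φ φ' φ'' hderiv1 hderiv2 hcont x hx
  -- setup product measure and Fubini
  set ν : Measure ℝ := volume.restrict (Set.Ioc a b) with hν
  have hνfin : IsFiniteMeasure ν := by
    constructor
    rw [hν, Measure.restrict_apply MeasurableSet.univ, Set.univ_inter, Real.volume_Ioc]
    exact ENNReal.ofReal_lt_top
  set M : Measure (Ω × ℝ) := (ℙ : Measure Ω).prod ν with hM
  haveI := hνfin
  obtain ⟨C, hC⟩ := isCompact_Icc.exists_bound_of_continuousOn hcont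
  have hXm : AEStronglyMeasurable (fun p : Ω × ℝ => X p.1) M :=
    hXint.aestronglyMeasurable.comp_fst
  have hφ''m : AEStronglyMeasurable (fun p : Ω × ℝ => φ'' p.2) M :=
    AEStronglyMeasurable.comp_snd
      ((hcont.mono Set.Ioc_subset_Icc_self).aestronglyMeasurable measurableSet_Ioc)
  have hFm : AEStronglyMeasurable (fun p : Ω × ℝ => max (X p.1 - p.2) 0 * φ'' p.2) M := by
    apply AEStronglyMeasurable.mul _ hφ''m
    have hsubm : AEStronglyMeasurable (fun p : Ω × ℝ => X p.1 - p.2) M :=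
      hXm.sub measurable_snd.aestronglyMeasurable
    exact ((continuous_id.max continuous_const).comp_aestronglyMeasurable hsubm :)
  have haesnd : ∀ᵐ p ∂M, p.2 ∈ Set.Ioc a b := by
    rw [ae_iff]
    have hset : {p : Ω × ℝ | ¬ p.2 ∈ Set.Ioc a b} = Set.univ ×ˢ (Set.Ioc a b)ᶜ := by
      ext p; simp
    rw [hset, hM, Measure.prod_prod, hν,
      Measure.restrict_apply (measurableSet_Ioc.compl)]
    simp
  have hFint : Integrable (fun p : Ω × ℝ => max (X p.1 - p.2) 0 * φ'' p.2) M := by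
    apply Integrable.mono' (integrable_const ((b - a) * C)) hFm
    filter_upwards [haesnd] with p hp
    have h1 : |max (X p.1 - p.2) 0| ≤ b - a := by
      rw [abs_of_nonneg (le_max_right _ _)]
      apply max_le _ (by linarith)
      have := (hXI p.1).2; have := hp.1; linarith
    have h2 : |φ'' p.2| ≤ C := hC p.2 (Set.Ioc_subset_Icc_self hp)
    have hC0 : (0:ℝ) ≤ C := le_trans (abs_nonneg _) h2
    calc ‖max (X p.1 - p.2) 0 * φ'' p.2‖ = |max (X p.1 - p.2) 0| * |φ'' p.2| := abs_mul _ _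
      _ ≤ (b - a) * C := mul_le_mul h1 h2 (abs_nonneg _) (by linarith [h1, abs_nonneg (max (X p.1 - p.2) 0)])
  -- integrate the pointwise identity over ω
  have hswap : ∫ ω, ∫ t in Set.Ioc a b, max (X ω - t) 0 * φ'' t
      = ∫ t in Set.Ioc a b, ∫ ω, max (X ω - t) 0 * φ'' t :=
    integral_integral_swap hFint
  have hstep : (∫ ω, φ (X ω)) - φ a - φ' a * (μ - a)
      = ∫ t in Set.Ioc a b, ∫ ω, max (X ω - t) 0 * φ'' t := by
    rw [← hswap]
    have heq : ∀ ω, (φ (X ω) - φ a - φ' a * (X ω - a))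
        = ∫ t in Set.Ioc a b, max (X ω - t) 0 * φ'' t := by
      intro ω
      have := hkey (X ω) (hXI ω)
      linarith
    have h1 : ∫ ω, (φ (X ω) - φ a - φ' a * (X ω - a))
        = ∫ ω, ∫ t in Set.Ioc a b, max (X ω - t) 0 * φ'' t :=
      integral_congr_ae (Filter.Eventually.of_forall fun ω => heq ω)
    rw [← h1]
    have hA : Integrable (fun ω => φ (X ω) - φ a) := by
      exact hφXint.sub (integrable_const (φ a))
    have hB : Integrable (fun ω => φ' a * (X ω - a)) := by
      exact ((hXint.sub (integrable_const a)).const_mul (φ' a))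
    have hXa : Integrable (fun ω => X ω - a) := by exact hXint.sub (integrable_const a)
    rw [show (∫ ω, (φ (X ω) - φ a - φ' a * (X ω - a))) =
        ∫ ω, ((φ (X ω) - φ a) - φ' a * (X ω - a)) from rfl,
      integral_sub hA hB, integral_sub hφXint (integrable_const (φ a)),
      integral_const_mul, integral_sub hXint (integrable_const a)]
    simp [← hμ]
  -- expansion of φ μ
  have hμexp : φ μ = φ a + φ' a * (μ - a) + ∫ t in Set.Ioc a b, max (μ - t) 0 * φ'' t :=
    hkey μ hμI
  -- combine
  have hdiff : (∫ ω, φ (X ω)) - φ μ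
      = ∫ t in Set.Ioc a b, ((∫ ω, max (X ω - t) 0) - max (μ - t) 0) * φ'' t := by
    have hint1 : Integrable (fun t => ∫ ω, max (X ω - t) 0 * φ'' t) ν :=
      hFint.integral_prod_right
    have hint1' : Integrable (fun t => (∫ ω, max (X ω - t) 0) * φ'' t) ν := by
      apply hint1.congr
      filter_upwards with t
      rw [integral_mul_const]
    have hint2 : Integrable (fun t => max (μ - t) 0 * φ'' t) ν := by
      have : ContinuousOn (fun t => max (μ - t) 0 * φ'' t) (Set.Icc a b) :=
        ContinuousOn.mul (by fun_prop) hcont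
      exact (this.integrableOn_Icc).mono_set Set.Ioc_subset_Icc_self
    have hμexp' : φ μ - (φ a + φ' a * (μ - a)) = ∫ t in Set.Ioc a b, max (μ - t) 0 * φ'' t := by
      linarith
    have hmulω : ∀ t : ℝ, (∫ ω, max (X ω - t) 0 * φ'' t) = (∫ ω, max (X ω - t) 0) * φ'' t :=
      fun t => integral_mul_const _ _
    calc (∫ ω, φ (X ω)) - φ μ
        = ((∫ ω, φ (X ω)) - φ a - φ' a * (μ - a)) - (φ μ - (φ a + φ' a * (μ - a))) := by ring
      _ = (∫ t in Set.Ioc a b, (∫ ω, max (X ω - t) 0) * φ'' t)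
          - ∫ t in Set.Ioc a b, max (μ - t) 0 * φ'' t := by
          rw [hstep, hμexp']
          congr 1
          exact integral_congr_ae (Filter.Eventually.of_forall fun t => hmulω t)
      _ = ∫ t in Set.Ioc a b, ((∫ ω, max (X ω - t) 0) - max (μ - t) 0) * φ'' t := by
          rw [← integral_sub hint1' hint2]
          congr 1; funext t; ring
  rw [hdiff, intervalIntegral.integral_of_le hab]
  apply integral_congr_ae
  filter_upwards with t
  have hXsub : Integrable (fun ω => X ω - t) := hXint.sub (integrable_const t)
  have hXabs : Integrable (fun ω => |X ω - t|) := hXsub.abs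
  have hmax : (∫ ω, max (X ω - t) 0) = 1 / 2 * ((∫ ω, |X ω - t|) + (μ - t)) := by
    have h1 : ∀ ω, max (X ω - t) 0 = 1 / 2 * (|X ω - t| + (X ω - t)) := by
      intro ω
      rcases le_total (X ω - t) 0 with h | h
      · rw [max_eq_right h, abs_of_nonpos h]; ring
      · rw [max_eq_left h, abs_of_nonneg h]; ring
    rw [integral_congr_ae (Filter.Eventually.of_forall h1)]
    rw [integral_const_mul, integral_add hXabs hXsub, integral_sub hXint (integrable_const t)]
    simp [← hμ]
  have hmaxμ : max (μ - t) 0 = 1 / 2 * (|μ - t| + (μ - t)) := by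
    rcases le_total (μ - t) 0 with h | h
    · rw [max_eq_right h, abs_of_nonpos h]; ring
    · rw [max_eq_left h, abs_of_nonneg h]; ring
  rw [hmax, hmaxμ]
  ring
end

section
/- Let φ : [a,b] → ℝ be twice continuously differentiable with m ≤ φ''(t) ≤ M for all t ∈ [a,b], let X be a random variable taking values in [a,b] with mean μ, and let K(t) = (1/2)·( E[|X − t|] − |μ − t| ). Denote by K̄ = (1/(b−a))·∫_a^b K(t) dt and φ̄'' = (1/(b−a))·∫_a^b φ''(t) dt the averages of K and φ'' over [a,b]. Then | E[φ(X)] − φ(μ) − (b−a)·K̄·φ̄'' | ≤ ((b−a)/4)·( sup_{t∈[a,b]} K(t) − inf_{t∈[a,b]} K(t) )·(M − m). -/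
open MeasureTheory ProbabilityTheory
open scoped ProbabilityTheory

/-- Cauchy–Schwarz inequality for integrals, proved via the quadratic discriminant. -/
lemma my_cs {α : Type*} [MeasurableSpace α] (ρ : Measure α) (F G : α → ℝ)
    (hF : Integrable (fun x => F x ^ 2) ρ) (hG : Integrable (fun x => G x ^ 2) ρ)
    (hFG : Integrable (fun x => F x * G x) ρ) :
    (∫ x, F x * G x ∂ρ) ^ 2 ≤ (∫ x, F x ^ 2 ∂ρ) * ∫ x, G x ^ 2 ∂ρ := by
  have h : ∀ lam : ℝ, 0 ≤ (∫ x, G x ^ 2 ∂ρ) * (lam * lam) + (2 * ∫ x, F x * G x ∂ρ) * lam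
      + ∫ x, F x ^ 2 ∂ρ := by
    intro lam
    have heq : (fun x => (lam * G x + F x) ^ 2)
        = fun x => (lam * lam * G x ^ 2 + 2 * lam * (F x * G x)) + F x ^ 2 := by
      funext x; ring
    have h0 : 0 ≤ ∫ x, (lam * G x + F x) ^ 2 ∂ρ :=
      integral_nonneg fun x => sq_nonneg _
    have hA : Integrable (fun x => lam * lam * G x ^ 2 + 2 * lam * (F x * G x)) ρ :=
      (hG.const_mul _).add (hFG.const_mul _)
    have hB : Integrable (fun x => lam * lam * G x ^ 2) ρ := hG.const_mul _
    have hC : Integrable (fun x => 2 * lam * (F x * G x)) ρ := hFG.const_mul _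
    rw [heq, integral_add hA hF, integral_add hB hC, integral_const_mul,
      integral_const_mul] at h0
    nlinarith [h0]
  have hd := discrim_le_zero h
  rw [discrim] at hd
  nlinarith [hd]

/-- Green-function identity: explicit evaluation of `∫ φ''(t) |x - t| dt` over `[a,b]`. -/
lemma green_rep (a b : ℝ) (hab : a ≤ b) (φ φ' φ'' : ℝ → ℝ)
    (hderiv1 : ∀ x ∈ Set.Icc a b, HasDerivWithinAt φ (φ' x) (Set.Icc a b) x)
    (hderiv2 : ∀ x ∈ Set.Icc a b, HasDerivWithinAt φ' (φ'' x) (Set.Icc a b) x)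
    (hcont : ContinuousOn φ'' (Set.Icc a b))
    (x : ℝ) (hx : x ∈ Set.Icc a b) :
    (∫ t in a..b, φ'' t * |x - t|) =
      2 * φ x - φ a - φ b - φ' a * (x - a) + φ' b * (b - x) := by
  obtain ⟨hax, hxb⟩ := hx
  have hcontφ : ContinuousOn φ (Set.Icc a b) := fun y hy => (hderiv1 y hy).continuousWithinAt
  have hcontφ' : ContinuousOn φ' (Set.Icc a b) := fun y hy => (hderiv2 y hy).continuousWithinAt
  have habs : Continuous fun t : ℝ => |x - t| := (continuous_const.sub continuous_id).abs
  have hci : ContinuousOn (fun t => φ'' t * |x - t|) (Set.Icc a b) :=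
    hcont.mul habs.continuousOn
  have hint1 : IntervalIntegrable (fun t => φ'' t * |x - t|) volume a x :=
    (hci.mono (Set.Icc_subset_Icc le_rfl hxb)).intervalIntegrable_of_Icc hax
  have hint2 : IntervalIntegrable (fun t => φ'' t * |x - t|) volume x b :=
    (hci.mono (Set.Icc_subset_Icc hax le_rfl)).intervalIntegrable_of_Icc hxb
  have hsplit := intervalIntegral.integral_add_adjacent_intervals hint1 hint2
  have h1 : (∫ t in a..x, φ'' t * |x - t|) = ∫ t in a..x, φ'' t * (x - t) := by
    apply intervalIntegral.integral_congr
    intro t ht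
    rw [Set.uIcc_of_le hax] at ht
    have h : t ≤ x := ht.2
    show φ'' t * |x - t| = φ'' t * (x - t)
    rw [abs_of_nonneg (by linarith)]
  have h2 : (∫ t in a..x, φ'' t * (x - t)) = φ x - φ a - φ' a * (x - a) := by
    have hFcont : ContinuousOn (fun t => (x - t) * φ' t + φ t) (Set.Icc a x) := by
      apply ContinuousOn.add
      · exact ((continuous_const.sub continuous_id).continuousOn).mul
          (hcontφ'.mono (Set.Icc_subset_Icc le_rfl hxb))
      · exact hcontφ.mono (Set.Icc_subset_Icc le_rfl hxb)
    have hFd : ∀ t ∈ Set.Ioo a x, HasDerivWithinAt (fun t => (x - t) * φ' t + φ t)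
        (φ'' t * (x - t)) (Set.Ioi t) t := by
      intro t ht
      have htI : t ∈ Set.Icc a b := ⟨ht.1.le, ht.2.le.trans hxb⟩
      have hmem : Set.Icc a b ∈ nhds t := Icc_mem_nhds ht.1 (lt_of_lt_of_le ht.2 hxb)
      have hd1 : HasDerivAt φ (φ' t) t := (hderiv1 t htI).hasDerivAt hmem
      have hd2 : HasDerivAt φ' (φ'' t) t := (hderiv2 t htI).hasDerivAt hmem
      have hmain : HasDerivAt (fun t => (x - t) * φ' t + φ t)
          ((0 - 1) * φ' t + (x - t) * φ'' t + φ' t) t :=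
        (((hasDerivAt_const t x).sub (hasDerivAt_id t)).mul hd2).add hd1
      have heq : (0 - 1) * φ' t + (x - t) * φ'' t + φ' t = φ'' t * (x - t) := by ring
      rw [heq] at hmain
      exact hmain.hasDerivWithinAt
    have hii : IntervalIntegrable (fun t => φ'' t * (x - t)) volume a x := by
      apply ContinuousOn.intervalIntegrable_of_Icc hax
      exact (hcont.mono (Set.Icc_subset_Icc le_rfl hxb)).mul
        ((continuous_const.sub continuous_id).continuousOn)
    have := intervalIntegral.integral_eq_sub_of_hasDeriv_right_of_le hax hFcont hFd hii
    rw [this]; ring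
  have h3 : (∫ t in x..b, φ'' t * |x - t|) = ∫ t in x..b, φ'' t * (t - x) := by
    apply intervalIntegral.integral_congr
    intro t ht
    rw [Set.uIcc_of_le hxb] at ht
    have h : x ≤ t := ht.1
    show φ'' t * |x - t| = φ'' t * (t - x)
    rw [abs_of_nonpos (by linarith), neg_sub]
  have h4 : (∫ t in x..b, φ'' t * (t - x)) = (b - x) * φ' b - φ b + φ x := by
    have hGcont : ContinuousOn (fun t => (t - x) * φ' t - φ t) (Set.Icc x b) := by
      apply ContinuousOn.sub
      · exact ((continuous_id.sub continuous_const).continuousOn).mul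
          (hcontφ'.mono (Set.Icc_subset_Icc hax le_rfl))
      · exact hcontφ.mono (Set.Icc_subset_Icc hax le_rfl)
    have hGd : ∀ t ∈ Set.Ioo x b, HasDerivWithinAt (fun t => (t - x) * φ' t - φ t)
        (φ'' t * (t - x)) (Set.Ioi t) t := by
      intro t ht
      have htI : t ∈ Set.Icc a b := ⟨hax.trans ht.1.le, ht.2.le⟩
      have hmem : Set.Icc a b ∈ nhds t := Icc_mem_nhds (lt_of_le_of_lt hax ht.1) ht.2
      have hd1 : HasDerivAt φ (φ' t) t := (hderiv1 t htI).hasDerivAt hmem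
      have hd2 : HasDerivAt φ' (φ'' t) t := (hderiv2 t htI).hasDerivAt hmem
      have hmain : HasDerivAt (fun t => (t - x) * φ' t - φ t)
          ((1 - 0) * φ' t + (t - x) * φ'' t - φ' t) t :=
        (((hasDerivAt_id t).sub (hasDerivAt_const t x)).mul hd2).sub hd1
      have heq : (1 - 0) * φ' t + (t - x) * φ'' t - φ' t = φ'' t * (t - x) := by ring
      rw [heq] at hmain
      exact hmain.hasDerivWithinAt
    have hii : IntervalIntegrable (fun t => φ'' t * (t - x)) volume x b := by
      apply ContinuousOn.intervalIntegrable_of_Icc hxb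
      exact (hcont.mono (Set.Icc_subset_Icc hax le_rfl)).mul
        ((continuous_id.sub continuous_const).continuousOn)
    have := intervalIntegral.integral_eq_sub_of_hasDeriv_right_of_le hxb hGcont hGd hii
    rw [this]; ring
  rw [← hsplit, h1, h2, h3, h4]; ring

set_option maxHeartbeats 1600000 in
/-- **Grüss-type refinement via the Green-function representation.**
With `K(t) = (1/2)·(E[|X − t|] − |μ − t|)`, `K̄` and `φ̄''` the averages of `K` and `φ''`
over `[a,b]`, and `m ≤ φ'' ≤ M` on `[a,b]`,
`|E[φ(X)] − φ(μ) − (b−a)·K̄·φ̄''| ≤ ((b−a)/4)·(sup K − inf K)·(M − m)`. -/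
theorem gruss_green_refinement
    {Ω : Type*} [MeasureSpace Ω] [IsProbabilityMeasure (ℙ : Measure Ω)]
    (a b : ℝ) (hab : a < b)
    (φ φ' φ'' : ℝ → ℝ) (m M : ℝ)
    (hderiv1 : ∀ x ∈ Set.Icc a b, HasDerivWithinAt φ (φ' x) (Set.Icc a b) x)
    (hderiv2 : ∀ x ∈ Set.Icc a b, HasDerivWithinAt φ' (φ'' x) (Set.Icc a b) x)
    (hcont : ContinuousOn φ'' (Set.Icc a b))
    (hm : ∀ t ∈ Set.Icc a b, m ≤ φ'' t) (hM : ∀ t ∈ Set.Icc a b, φ'' t ≤ M)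
    (X : Ω → ℝ) (hXI : ∀ ω, X ω ∈ Set.Icc a b)
    (hXint : Integrable X) (hφXint : Integrable (fun ω => φ (X ω)))
    (μ : ℝ) (hμ : μ = ∫ ω, X ω)
    (K : ℝ → ℝ) (hK : ∀ t, K t = 1 / 2 * ((∫ ω, |X ω - t|) - |μ - t|))
    (Kbar : ℝ) (hKbar : Kbar = 1 / (b - a) * ∫ t in a..b, K t)
    (φ''bar : ℝ) (hφ''bar : φ''bar = 1 / (b - a) * ∫ t in a..b, φ'' t) :
    |(∫ ω, φ (X ω)) - φ μ - (b - a) * Kbar * φ''bar| ≤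
      (b - a) / 4 * (sSup (K '' Set.Icc a b) - sInf (K '' Set.Icc a b)) * (M - m) := by
  have hI : (0:ℝ) < b - a := by linarith
  -- μ lies in [a, b]
  have hμI : μ ∈ Set.Icc a b := by
    constructor
    · calc a = ∫ _ω : Ω, a := by simp
        _ ≤ ∫ ω, X ω := integral_mono (integrable_const a) hXint fun ω => (hXI ω).1
        _ = μ := hμ.symm
    · calc μ = ∫ ω, X ω := hμ
        _ ≤ ∫ _ω : Ω, b := integral_mono hXint (integrable_const b) fun ω => (hXI ω).2
        _ = b := by simp
  -- integrability of |X - t|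
  have hXabs : ∀ t : ℝ, Integrable (fun ω => |X ω - t|) :=
    fun t => (hXint.sub (integrable_const t)).abs
  -- K is Lipschitz, hence continuous
  have hKlip : ∀ s t : ℝ, |K t - K s| ≤ |t - s| := by
    intro s t
    have hDrw : (∫ ω, |X ω - t|) - (∫ ω, |X ω - s|) = ∫ ω, (|X ω - t| - |X ω - s|) :=
      (integral_sub (hXabs t) (hXabs s)).symm
    have hD : |(∫ ω, |X ω - t|) - (∫ ω, |X ω - s|)| ≤ |t - s| := by
      rw [hDrw]
      have := norm_integral_le_of_norm_le (μ := (ℙ : Measure Ω))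
        (f := fun ω => |X ω - t| - |X ω - s|) (g := fun _ => |t - s|)
        (integrable_const _) (Filter.Eventually.of_forall fun ω => by
          rw [Real.norm_eq_abs]
          calc |(|X ω - t| - |X ω - s|)| ≤ |(X ω - t) - (X ω - s)| :=
                abs_abs_sub_abs_le_abs_sub _ _
            _ = |s - t| := by ring_nf
            _ = |t - s| := abs_sub_comm _ _)
      rw [Real.norm_eq_abs] at this
      simpa using this
    have hE : |(|μ - t| - |μ - s|)| ≤ |t - s| := by
      calc |(|μ - t| - |μ - s|)| ≤ |(μ - t) - (μ - s)| := abs_abs_sub_abs_le_abs_sub _ _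
        _ = |s - t| := by ring_nf
        _ = |t - s| := abs_sub_comm _ _
    have hrw : K t - K s = 1 / 2 * (((∫ ω, |X ω - t|) - (∫ ω, |X ω - s|))
        - ((|μ - t|) - (|μ - s|))) := by rw [hK t, hK s]; ring
    rw [hrw]
    rw [abs_mul, abs_of_nonneg (by norm_num : (0:ℝ) ≤ 1/2)]
    have habs2 := abs_sub ((∫ ω, |X ω - t|) - (∫ ω, |X ω - s|)) ((|μ - t|) - (|μ - s|))
    nlinarith [hD, hE, habs2]
  have hKcont : Continuous K := by
    apply LipschitzWith.continuous (K := 1)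
    apply LipschitzWith.of_dist_le_mul
    intro t s
    rw [Real.dist_eq, Real.dist_eq]
    simpa using hKlip s t
  -- the kernel
  set k : ℝ → ℝ → ℝ := fun x t => 1 / 2 * (|x - t| - |μ - t|) with hk
  have hiabs : ∀ y : ℝ, IntervalIntegrable (fun t => φ'' t * |y - t|) volume a b :=
    fun y => (hcont.mul ((continuous_const.sub continuous_id).abs.continuousOn)
      ).intervalIntegrable_of_Icc hab.le
  set c : ℝ := (φ' a + φ' b) / 2 with hc
  -- pointwise Green representation
  have hptw : ∀ x ∈ Set.Icc a b,
      (∫ t in a..b, φ'' t * k x t) = φ x - φ μ - c * (x - μ) := by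
    intro x hx
    have hrwf : (fun t => φ'' t * k x t)
        = fun t => 1 / 2 * (φ'' t * |x - t|) - 1 / 2 * (φ'' t * |μ - t|) := by
      funext t; simp only [hk]; ring
    rw [hrwf, intervalIntegral.integral_sub ((hiabs x).const_mul _) ((hiabs μ).const_mul _),
      intervalIntegral.integral_const_mul, intervalIntegral.integral_const_mul,
      green_rep a b hab.le φ φ' φ'' hderiv1 hderiv2 hcont x hx,
      green_rep a b hab.le φ φ' φ'' hderiv1 hderiv2 hcont μ hμI]
    simp only [hc]; ring
  -- expectation of the pointwise representation
  have hsum : (∫ ω, (∫ t in a..b, φ'' t * k (X ω) t)) = (∫ ω, φ (X ω)) - φ μ := by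
    have hrwf : (fun ω => ∫ t in a..b, φ'' t * k (X ω) t)
        = fun ω => φ (X ω) - φ μ - c * (X ω - μ) :=
      funext fun ω => hptw (X ω) (hXI ω)
    rw [hrwf]
    have h1 : Integrable (fun ω => φ (X ω) - φ μ) := hφXint.sub (integrable_const _)
    have h2 : Integrable (fun ω => c * (X ω - μ)) :=
      (hXint.sub (integrable_const μ)).const_mul c
    rw [integral_sub h1 h2, integral_sub hφXint (integrable_const _), integral_const_mul,
      integral_sub hXint (integrable_const μ)]
    simp [hμ.symm]
  -- Fubini
  have hswap : (∫ ω, (∫ t in a..b, φ'' t * k (X ω) t)) = ∫ t in a..b, φ'' t * K t := by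
    have hconv : ∀ ω : Ω, (∫ t in a..b, φ'' t * k (X ω) t)
        = ∫ t in Set.Ioc a b, φ'' t * k (X ω) t :=
      fun ω => intervalIntegral.integral_of_le hab.le
    simp_rw [hconv]
    set ρ' : Measure ℝ := volume.restrict (Set.Ioc a b) with hρ'
    haveI : IsFiniteMeasure ρ' := by
      constructor
      rw [hρ', Measure.restrict_apply_univ]
      exact (measure_mono Set.Ioc_subset_Icc_self).trans_lt
        (isCompact_Icc.measure_lt_top)
    have hmeas : AEStronglyMeasurable
        (Function.uncurry fun (ω : Ω) (t : ℝ) => φ'' t * k (X ω) t) ((ℙ : Measure Ω).prod ρ') := by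
      have p1 : AEStronglyMeasurable (fun p : Ω × ℝ => φ'' p.2) ((ℙ : Measure Ω).prod ρ') :=
        AEStronglyMeasurable.comp_snd
          ((hcont.mono Set.Ioc_subset_Icc_self).aestronglyMeasurable measurableSet_Ioc)
      have p2 : AEStronglyMeasurable (fun p : Ω × ℝ => |X p.1 - p.2|)
          ((ℙ : Measure Ω).prod ρ') := by
        have : AEStronglyMeasurable (fun p : Ω × ℝ => X p.1 - p.2)
            ((ℙ : Measure Ω).prod ρ') :=
          hXint.1.comp_fst.sub measurable_snd.aestronglyMeasurable
        simpa [Real.norm_eq_abs] using this.norm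
      have p3 : AEStronglyMeasurable (fun p : Ω × ℝ => |μ - p.2|)
          ((ℙ : Measure Ω).prod ρ') :=
        ((measurable_const.sub measurable_snd).abs).aestronglyMeasurable
      exact p1.mul ((p2.sub p3).const_mul (1/2))
    have hae : ∀ᵐ p : Ω × ℝ ∂((ℙ : Measure Ω).prod ρ'), p.2 ∈ Set.Ioc a b :=
      MeasureTheory.Measure.quasiMeasurePreserving_snd.ae
        (ae_restrict_mem measurableSet_Ioc)
    set C : ℝ := (max |m| |M|) * (b - a) with hC
    have hHint : Integrable (Function.uncurry fun (ω : Ω) (t : ℝ) => φ'' t * k (X ω) t)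
        ((ℙ : Measure Ω).prod ρ') := by
      apply Integrable.mono' (integrable_const C) hmeas
      filter_upwards [hae] with p hp
      have hpI : p.2 ∈ Set.Icc a b := Set.Ioc_subset_Icc_self hp
      have h1 : |φ'' p.2| ≤ max |m| |M| := by
        have := hm p.2 hpI; have := hM p.2 hpI
        rw [abs_le]
        constructor
        · have : -|m| ≤ m := neg_abs_le m
          calc -(max |m| |M|) ≤ -|m| := by
                simp only [neg_le_neg_iff]; exact le_max_left _ _
            _ ≤ m := neg_abs_le m
            _ ≤ φ'' p.2 := hm p.2 hpI
        · calc φ'' p.2 ≤ M := hM p.2 hpI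
            _ ≤ |M| := le_abs_self M
            _ ≤ max |m| |M| := le_max_right _ _
      have h2 : |k (X p.1) p.2| ≤ b - a := by
        have hx := hXI p.1
        have hxd : |X p.1 - μ| ≤ b - a := by
          rw [abs_le]; constructor
          · have := hx.1; have := hμI.2; linarith
          · have := hx.2; have := hμI.1; linarith
        have h3 : |(|X p.1 - p.2| - |μ - p.2|)| ≤ |X p.1 - μ| := by
          calc |(|X p.1 - p.2| - |μ - p.2|)| ≤ |(X p.1 - p.2) - (μ - p.2)| :=
              abs_abs_sub_abs_le_abs_sub _ _
            _ = |X p.1 - μ| := by ring_nf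
        simp only [hk]
        rw [abs_mul, abs_of_nonneg (by norm_num : (0:ℝ) ≤ 1/2)]
        nlinarith [h3, hxd]
      rw [Function.uncurry, Real.norm_eq_abs, abs_mul]
      calc |φ'' p.2| * |k (X p.1) p.2| ≤ (max |m| |M|) * (b - a) := by
            apply mul_le_mul h1 h2 (abs_nonneg _)
            exact (abs_nonneg m).trans (le_max_left _ _)
        _ = C := hC.symm
    have := MeasureTheory.integral_integral_swap hHint
    rw [this]
    rw [intervalIntegral.integral_of_le hab.le]
    apply setIntegral_congr_fun measurableSet_Ioc
    intro t _
    show (∫ ω, φ'' t * k (X ω) t) = φ'' t * K t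
    rw [integral_const_mul]
    congr 1
    have : (fun ω => k (X ω) t) = fun ω => 1/2 * (|X ω - t| - |μ - t|) := by
      funext ω; simp [hk]
    rw [this, integral_const_mul, integral_sub (hXabs t) (integrable_const _), integral_const]
    simp [hK t]
  -- set up the Grüss step over the restricted measure
  set ρ : Measure ℝ := volume.restrict (Set.Icc a b) with hρ
  haveI : IsFiniteMeasure ρ := by
    constructor
    rw [hρ, Measure.restrict_apply_univ]
    exact isCompact_Icc.measure_lt_top
  have hρuniv : ∀ r : ℝ, ∫ _t, r ∂ρ = r * (b - a) := by
    intro r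
    rw [hρ, setIntegral_const, Real.volume_real_Icc_of_le hab.le, smul_eq_mul,
      mul_comm]
  set A : ℝ := ∫ t, K t ∂ρ with hA
  set B : ℝ := ∫ t, φ'' t ∂ρ with hB
  set P : ℝ := ∫ t, φ'' t * K t ∂ρ with hP
  set SK : ℝ := sSup (K '' Set.Icc a b) with hSK
  set iK : ℝ := sInf (K '' Set.Icc a b) with hiK
  -- integrabilities over ρ
  have hKi : Integrable K ρ := hKcont.continuousOn.integrableOn_Icc
  have hGi : Integrable φ'' ρ := hcont.integrableOn_Icc
  have hK2i : Integrable (fun t => K t ^ 2) ρ :=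
    ((hKcont.pow 2).continuousOn).integrableOn_Icc
  have hG2i : Integrable (fun t => φ'' t ^ 2) ρ := (hcont.pow 2).integrableOn_Icc
  have hKGi : Integrable (fun t => φ'' t * K t) ρ :=
    (hcont.mul hKcont.continuousOn).integrableOn_Icc
  -- sup/inf bounds
  have hbddA : BddAbove (K '' Set.Icc a b) :=
    (isCompact_Icc.image_of_continuousOn hKcont.continuousOn).bddAbove
  have hbddB : BddBelow (K '' Set.Icc a b) :=
    (isCompact_Icc.image_of_continuousOn hKcont.continuousOn).bddBelow
  have hKle : ∀ t ∈ Set.Icc a b, K t ≤ SK := fun t ht => le_csSup hbddA ⟨t, ht, rfl⟩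
  have hKge : ∀ t ∈ Set.Icc a b, iK ≤ K t := fun t ht => csInf_le hbddB ⟨t, ht, rfl⟩
  have hSKiK : iK ≤ SK := le_trans (hKge a ⟨le_rfl, hab.le⟩) (hKle a ⟨le_rfl, hab.le⟩)
  have hmM : m ≤ M := le_trans (hm a ⟨le_rfl, hab.le⟩) (hM a ⟨le_rfl, hab.le⟩)
  -- integral bounds
  have hAub : A ≤ SK * (b - a) := by
    have := setIntegral_mono_on (μ := volume) (s := Set.Icc a b)
      hKi (integrable_const SK) measurableSet_Icc hKle
    rw [← hρ] at this
    calc A ≤ ∫ _t, SK ∂ρ := this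
      _ = SK * (b - a) := hρuniv SK
  have hAlb : iK * (b - a) ≤ A := by
    have := setIntegral_mono_on (μ := volume) (s := Set.Icc a b)
      (integrable_const iK) hKi measurableSet_Icc hKge
    rw [← hρ] at this
    calc iK * (b - a) = ∫ _t, iK ∂ρ := (hρuniv iK).symm
      _ ≤ A := this
  have hBub : B ≤ M * (b - a) := by
    have := setIntegral_mono_on (μ := volume) (s := Set.Icc a b)
      hGi (integrable_const M) measurableSet_Icc hM
    rw [← hρ] at this
    calc B ≤ ∫ _t, M ∂ρ := this
      _ = M * (b - a) := hρuniv M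
  have hBlb : m * (b - a) ≤ B := by
    have := setIntegral_mono_on (μ := volume) (s := Set.Icc a b)
      (integrable_const m) hGi measurableSet_Icc hm
    rw [← hρ] at this
    calc m * (b - a) = ∫ _t, m ∂ρ := (hρuniv m).symm
      _ ≤ B := this
  -- Popoviciu-type bound for K
  set QK : ℝ := ∫ t, K t ^ 2 ∂ρ with hQK
  set QG : ℝ := ∫ t, φ'' t ^ 2 ∂ρ with hQG
  have hPop1 : QK ≤ (SK + iK) * A - SK * iK * (b - a) := by
    have hq : 0 ≤ ∫ t, (SK - K t) * (K t - iK) ∂ρ := by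
      rw [hρ]
      apply setIntegral_nonneg measurableSet_Icc
      intro t ht
      exact mul_nonneg (sub_nonneg.2 (hKle t ht)) (sub_nonneg.2 (hKge t ht))
    have hrwf : (fun t => (SK - K t) * (K t - iK))
        = fun t => ((SK + iK) * K t - K t ^ 2) - SK * iK := by funext t; ring
    rw [hrwf] at hq
    have h1 : Integrable (fun t => (SK + iK) * K t - K t ^ 2) ρ :=
      (hKi.const_mul _).sub hK2i
    rw [integral_sub h1 (integrable_const (SK * iK)),
      integral_sub (hKi.const_mul _) hK2i, integral_const_mul, hρuniv] at hq
    simp only [← hA, ← hQK] at hq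
    linarith
  have hPop2 : QG ≤ (M + m) * B - M * m * (b - a) := by
    have hq : 0 ≤ ∫ t, (M - φ'' t) * (φ'' t - m) ∂ρ := by
      rw [hρ]
      apply setIntegral_nonneg measurableSet_Icc
      intro t ht
      exact mul_nonneg (sub_nonneg.2 (hM t ht)) (sub_nonneg.2 (hm t ht))
    have hrwf : (fun t => (M - φ'' t) * (φ'' t - m))
        = fun t => ((M + m) * φ'' t - φ'' t ^ 2) - M * m := by funext t; ring
    rw [hrwf] at hq
    have h1 : Integrable (fun t => (M + m) * φ'' t - φ'' t ^ 2) ρ :=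
      (hGi.const_mul _).sub hG2i
    rw [integral_sub h1 (integrable_const (M * m)),
      integral_sub (hGi.const_mul _) hG2i, integral_const_mul, hρuniv] at hq
    simp only [← hB, ← hQG] at hq
    linarith
  -- centered functions and Cauchy-Schwarz
  set Abar : ℝ := A / (b - a) with hAbar
  set Bbar : ℝ := B / (b - a) with hBbar
  set F : ℝ → ℝ := fun t => K t - Abar with hF
  set G : ℝ → ℝ := fun t => φ'' t - Bbar with hG2
  have hFi2 : Integrable (fun t => F t ^ 2) ρ := by
    have hrwf : (fun t => F t ^ 2) = fun t => (K t ^ 2 - 2 * Abar * K t) + Abar ^ 2 := by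
      funext t; simp only [hF]; ring
    rw [hrwf]
    exact (hK2i.sub (hKi.const_mul _)).add (integrable_const _)
  have hGi2 : Integrable (fun t => G t ^ 2) ρ := by
    have hrwf : (fun t => G t ^ 2) = fun t => (φ'' t ^ 2 - 2 * Bbar * φ'' t) + Bbar ^ 2 := by
      funext t; simp only [hG2]; ring
    rw [hrwf]
    exact (hG2i.sub (hGi.const_mul _)).add (integrable_const _)
  have hFGi : Integrable (fun t => F t * G t) ρ := by
    have hrwf : (fun t => F t * G t)
        = fun t => (φ'' t * K t - Abar * φ'' t - Bbar * K t) + Abar * Bbar := by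
      funext t; simp only [hF, hG2]; ring
    rw [hrwf]
    exact (((hKGi.sub (hGi.const_mul _)).sub (hKi.const_mul _))).add (integrable_const _)
  have hcs := my_cs ρ F G hFi2 hGi2 hFGi
  -- evaluate the integrals of the centered functions
  have hVF : (∫ t, F t ^ 2 ∂ρ) = QK - A ^ 2 / (b - a) := by
    have hrwf : (fun t => F t ^ 2) = fun t => (K t ^ 2 - 2 * Abar * K t) + Abar ^ 2 := by
      funext t; simp only [hF]; ring
    have i1 : Integrable (fun t => K t ^ 2 - 2 * Abar * K t) ρ := hK2i.sub (hKi.const_mul _)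
    have i2 : Integrable (fun t => 2 * Abar * K t) ρ := hKi.const_mul _
    rw [hrwf, integral_add i1 (integrable_const _),
      integral_sub hK2i i2, integral_const_mul, hρuniv]
    simp only [← hA, ← hQK, hAbar]
    field_simp
    ring
  have hVG : (∫ t, G t ^ 2 ∂ρ) = QG - B ^ 2 / (b - a) := by
    have hrwf : (fun t => G t ^ 2) = fun t => (φ'' t ^ 2 - 2 * Bbar * φ'' t) + Bbar ^ 2 := by
      funext t; simp only [hG2]; ring
    have i1 : Integrable (fun t => φ'' t ^ 2 - 2 * Bbar * φ'' t) ρ := hG2i.sub (hGi.const_mul _)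
    have i2 : Integrable (fun t => 2 * Bbar * φ'' t) ρ := hGi.const_mul _
    rw [hrwf, integral_add i1 (integrable_const _),
      integral_sub hG2i i2, integral_const_mul, hρuniv]
    simp only [← hB, ← hQG, hBbar]
    field_simp
    ring
  have hCov : (∫ t, F t * G t ∂ρ) = P - A * B / (b - a) := by
    have hrwf : (fun t => F t * G t)
        = fun t => (φ'' t * K t - Abar * φ'' t - Bbar * K t) + Abar * Bbar := by
      funext t; simp only [hF, hG2]; ring
    have i1 : Integrable (fun t => φ'' t * K t - Abar * φ'' t - Bbar * K t) ρ :=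
      (hKGi.sub (hGi.const_mul _)).sub (hKi.const_mul _)
    have i2 : Integrable (fun t => φ'' t * K t - Abar * φ'' t) ρ := hKGi.sub (hGi.const_mul _)
    have i3 : Integrable (fun t => Bbar * K t) ρ := hKi.const_mul _
    have i4 : Integrable (fun t => Abar * φ'' t) ρ := hGi.const_mul _
    rw [hrwf, integral_add i1 (integrable_const _),
      integral_sub i2 i3,
      integral_sub hKGi i4, integral_const_mul, integral_const_mul, hρuniv]
    simp only [← hA, ← hB, ← hP, hAbar, hBbar]
    field_simp
    ring
  -- variance bounds
  have hVFnn : 0 ≤ ∫ t, F t ^ 2 ∂ρ := integral_nonneg fun t => sq_nonneg _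
  have hVGnn : 0 ≤ ∫ t, G t ^ 2 ∂ρ := integral_nonneg fun t => sq_nonneg _
  have hVFb : (∫ t, F t ^ 2 ∂ρ) ≤ (b - a) * (SK - iK) ^ 2 / 4 := by
    rw [hVF]
    have key : (QK - A ^ 2 / (b - a)) * (b - a) ≤ ((b - a) * (SK - iK) ^ 2 / 4) * (b - a) := by
      have e : (QK - A ^ 2 / (b - a)) * (b - a) = QK * (b - a) - A ^ 2 := by
        field_simp
      rw [e]
      nlinarith [mul_le_mul_of_nonneg_right hPop1 hI.le,
        sq_nonneg (SK * (b - a) + iK * (b - a) - 2 * A)]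
    exact le_of_mul_le_mul_right key hI
  have hVGb : (∫ t, G t ^ 2 ∂ρ) ≤ (b - a) * (M - m) ^ 2 / 4 := by
    rw [hVG]
    have key : (QG - B ^ 2 / (b - a)) * (b - a) ≤ ((b - a) * (M - m) ^ 2 / 4) * (b - a) := by
      have e : (QG - B ^ 2 / (b - a)) * (b - a) = QG * (b - a) - B ^ 2 := by
        field_simp
      rw [e]
      nlinarith [mul_le_mul_of_nonneg_right hPop2 hI.le,
        sq_nonneg (M * (b - a) + m * (b - a) - 2 * B)]
    exact le_of_mul_le_mul_right key hI
  -- combine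
  have hsq : (P - A * B / (b - a)) ^ 2
      ≤ ((b - a) / 4 * (SK - iK) * (M - m)) ^ 2 := by
    rw [← hCov]
    calc (∫ t, F t * G t ∂ρ) ^ 2 ≤ (∫ t, F t ^ 2 ∂ρ) * ∫ t, G t ^ 2 ∂ρ := hcs
      _ ≤ ((b - a) * (SK - iK) ^ 2 / 4) * ((b - a) * (M - m) ^ 2 / 4) := by
          apply mul_le_mul hVFb hVGb hVGnn
          positivity
      _ = ((b - a) / 4 * (SK - iK) * (M - m)) ^ 2 := by ring
  have habs : |P - A * B / (b - a)| ≤ (b - a) / 4 * (SK - iK) * (M - m) := by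
    have hr : 0 ≤ (b - a) / 4 * (SK - iK) * (M - m) := by
      apply mul_nonneg (mul_nonneg (by linarith) (by linarith)) (by linarith)
    calc |P - A * B / (b - a)| = Real.sqrt ((P - A * B / (b - a)) ^ 2) :=
          (Real.sqrt_sq_eq_abs _).symm
      _ ≤ Real.sqrt (((b - a) / 4 * (SK - iK) * (M - m)) ^ 2) := Real.sqrt_le_sqrt hsq
      _ = (b - a) / 4 * (SK - iK) * (M - m) := Real.sqrt_sq hr
  -- final assembly
  have hconv1 : (∫ t in a..b, K t) = A := by
    rw [intervalIntegral.integral_of_le hab.le, hA, hρ, integral_Icc_eq_integral_Ioc]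
  have hconv2 : (∫ t in a..b, φ'' t) = B := by
    rw [intervalIntegral.integral_of_le hab.le, hB, hρ, integral_Icc_eq_integral_Ioc]
  have hconv3 : (∫ t in a..b, φ'' t * K t) = P := by
    rw [intervalIntegral.integral_of_le hab.le, hP, hρ, integral_Icc_eq_integral_Ioc]
  have hlhs : (∫ ω, φ (X ω)) - φ μ - (b - a) * Kbar * φ''bar = P - A * B / (b - a) := by
    have h1 : (∫ ω, φ (X ω)) - φ μ = P := by rw [← hsum, hswap, hconv3]
    rw [h1, hKbar, hφ''bar, hconv1, hconv2]
    field_simp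
  rw [hlhs]
  exact habs
end

section
/- Let I ⊆ ℝ be an interval, let φ : ℝ → ℝ be five times differentiable on I with |φ⁽⁵⁾(x)| ≤ L for all x ∈ I, and let X be a random variable taking values in I with mean μ and finite fifth absolute central moment. Assume φ'''(μ)·E[(X−μ)³] ≥ 0 and (φ⁽⁴⁾(μ)/24)·E[(X−μ)⁴] ≥ (L/120)·E[|X−μ|⁵]. Then E[φ(X)] ≥ φ(μ) + (φ''(μ)/2)·E[(X−μ)²] + (φ'''(μ)/6)·E[(X−μ)³]. -/
open MeasureTheory ProbabilityTheory
open scoped ProbabilityTheory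

private lemma hdw_congr {f : ℝ → ℝ} {f' g' : ℝ} {s : Set ℝ} {x : ℝ}
    (h : HasDerivWithinAt f f' s x) (h' : f' = g') : HasDerivWithinAt f g' s x := h' ▸ h

private lemma mono_aux {S : Set ℝ} (hS : Convex ℝ S) {f f' : ℝ → ℝ}
    (hf : ∀ x ∈ S, HasDerivWithinAt f (f' x) S x)
    (h0 : ∀ x ∈ S, 0 ≤ f' x) : MonotoneOn f S :=
  monotoneOn_of_hasDerivWithinAt_nonneg hS (fun x hx => (hf x hx).continuousWithinAt)
    (fun x hx => (hf x (interior_subset hx)).mono interior_subset)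
    (fun x hx => h0 x (interior_subset hx))

private lemma anti_aux {S : Set ℝ} (hS : Convex ℝ S) {f f' : ℝ → ℝ}
    (hf : ∀ x ∈ S, HasDerivWithinAt f (f' x) S x)
    (h0 : ∀ x ∈ S, f' x ≤ 0) {a b : ℝ} (ha : a ∈ S) (hb : b ∈ S) (hab : a ≤ b) :
    f b ≤ f a := by
  have := mono_aux hS (f := fun y => -f y) (f' := fun y => -f' y)
    (fun x hx => (hf x hx).neg) (fun x hx => neg_nonneg.2 (h0 x hx)) ha hb hab
  simp only [neg_le_neg_iff] at this; exact this

private lemma hd1 (c μ y : ℝ) : HasDerivAt (fun z : ℝ => c * (z - μ)) c y := by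
  simpa using ((hasDerivAt_id y).sub_const μ).const_mul c

private lemma hd2 (c μ y : ℝ) : HasDerivAt (fun z : ℝ => c * (z - μ) ^ 2) (c * (2 * (y - μ))) y := by
  simpa using (((hasDerivAt_id y).sub_const μ).pow 2).const_mul c

private lemma hd3 (c μ y : ℝ) : HasDerivAt (fun z : ℝ => c * (z - μ) ^ 3) (c * (3 * (y - μ) ^ 2)) y := by
  simpa using (((hasDerivAt_id y).sub_const μ).pow 3).const_mul c

private lemma hd4 (c μ y : ℝ) : HasDerivAt (fun z : ℝ => c * (z - μ) ^ 4) (c * (4 * (y - μ) ^ 3)) y := by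
  simpa using (((hasDerivAt_id y).sub_const μ).pow 4).const_mul c

private lemma hd5 (c μ y : ℝ) : HasDerivAt (fun z : ℝ => c * (z - μ) ^ 5) (c * (5 * (y - μ) ^ 4)) y := by
  simpa using (((hasDerivAt_id y).sub_const μ).pow 5).const_mul c

private lemma taylor5_lb (I : Set ℝ) (hI : I.OrdConnected)
    (φ φ' φ'' φ''' φ'''' φ''''' : ℝ → ℝ) (L : ℝ)
    (hderiv1 : ∀ x ∈ I, HasDerivWithinAt φ (φ' x) I x)
    (hderiv2 : ∀ x ∈ I, HasDerivWithinAt φ' (φ'' x) I x)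
    (hderiv3 : ∀ x ∈ I, HasDerivWithinAt φ'' (φ''' x) I x)
    (hderiv4 : ∀ x ∈ I, HasDerivWithinAt φ''' (φ'''' x) I x)
    (hderiv5 : ∀ x ∈ I, HasDerivWithinAt φ'''' (φ''''' x) I x)
    (hL : ∀ x ∈ I, |φ''''' x| ≤ L)
    (μ : ℝ) (hμI : μ ∈ I) (x : ℝ) (hx : x ∈ I) :
    φ μ + φ' μ * (x - μ) + φ'' μ / 2 * (x - μ) ^ 2 + φ''' μ / 6 * (x - μ) ^ 3
      + φ'''' μ / 24 * (x - μ) ^ 4 - L / 120 * |x - μ| ^ 5 ≤ φ x := by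
  have hIc : Convex ℝ I := hI.convex
  rcases le_total μ x with hμx | hxμ
  · -- case μ ≤ x
    set S : Set ℝ := I ∩ Set.Icc μ x with hS
    have hSc : Convex ℝ S := hIc.inter (convex_Icc μ x)
    have hSI : S ⊆ I := Set.inter_subset_left
    have hμS : μ ∈ S := ⟨hμI, Set.left_mem_Icc.2 hμx⟩
    have hxS : x ∈ S := ⟨hx, Set.right_mem_Icc.2 hμx⟩
    have key4 : ∀ y ∈ S, φ'''' μ ≤ φ'''' y + L * (y - μ) := by
      intro y hy
      have := mono_aux hSc (f := fun z => φ'''' z + L * (z - μ))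
        (f' := fun z => φ''''' z + L)
        (fun z hz => ((hderiv5 z (hSI hz)).mono hSI).add (hd1 L μ z).hasDerivWithinAt)
        (fun z hz => by have := abs_le.mp (hL z (hSI hz)); linarith)
        hμS hy hy.2.1
      simpa using this
    have key3 : ∀ y ∈ S, φ''' μ ≤ φ''' y - φ'''' μ * (y - μ) + L / 2 * (y - μ) ^ 2 := by
      intro y hy
      have := mono_aux hSc (f := fun z => φ''' z - φ'''' μ * (z - μ) + L / 2 * (z - μ) ^ 2)
        (f' := fun z => φ'''' z + L * (z - μ) - φ'''' μ)
        (fun z hz => hdw_congr ((((hderiv4 z (hSI hz)).mono hSI).sub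
          (hd1 (φ'''' μ) μ z).hasDerivWithinAt).add (hd2 (L/2) μ z).hasDerivWithinAt) (by ring))
        (fun z hz => by have := key4 z hz; linarith)
        hμS hy hy.2.1
      simpa using this
    have key2 : ∀ y ∈ S, φ'' μ ≤ φ'' y - φ''' μ * (y - μ) - φ'''' μ / 2 * (y - μ) ^ 2
        + L / 6 * (y - μ) ^ 3 := by
      intro y hy
      have := mono_aux hSc
        (f := fun z => φ'' z - φ''' μ * (z - μ) - φ'''' μ / 2 * (z - μ) ^ 2 + L / 6 * (z - μ) ^ 3)
        (f' := fun z => φ''' z - φ'''' μ * (z - μ) + L / 2 * (z - μ) ^ 2 - φ''' μ)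
        (fun z hz => hdw_congr (((((hderiv3 z (hSI hz)).mono hSI).sub
          (hd1 (φ''' μ) μ z).hasDerivWithinAt).sub (hd2 (φ'''' μ / 2) μ z).hasDerivWithinAt).add
          (hd3 (L/6) μ z).hasDerivWithinAt) (by ring))
        (fun z hz => by have := key3 z hz; linarith)
        hμS hy hy.2.1
      simpa using this
    have key1 : ∀ y ∈ S, φ' μ ≤ φ' y - φ'' μ * (y - μ) - φ''' μ / 2 * (y - μ) ^ 2
        - φ'''' μ / 6 * (y - μ) ^ 3 + L / 24 * (y - μ) ^ 4 := by
      intro y hy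
      have := mono_aux hSc
        (f := fun z => φ' z - φ'' μ * (z - μ) - φ''' μ / 2 * (z - μ) ^ 2
          - φ'''' μ / 6 * (z - μ) ^ 3 + L / 24 * (z - μ) ^ 4)
        (f' := fun z => φ'' z - φ''' μ * (z - μ) - φ'''' μ / 2 * (z - μ) ^ 2
          + L / 6 * (z - μ) ^ 3 - φ'' μ)
        (fun z hz => hdw_congr ((((((hderiv2 z (hSI hz)).mono hSI).sub
          (hd1 (φ'' μ) μ z).hasDerivWithinAt).sub (hd2 (φ''' μ / 2) μ z).hasDerivWithinAt).sub
          (hd3 (φ'''' μ / 6) μ z).hasDerivWithinAt).add (hd4 (L/24) μ z).hasDerivWithinAt) (by ring))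
        (fun z hz => by have := key2 z hz; linarith)
        hμS hy hy.2.1
      simpa using this
    have key0 : φ μ ≤ φ x - φ' μ * (x - μ) - φ'' μ / 2 * (x - μ) ^ 2
        - φ''' μ / 6 * (x - μ) ^ 3 - φ'''' μ / 24 * (x - μ) ^ 4 + L / 120 * (x - μ) ^ 5 := by
      have := mono_aux hSc
        (f := fun z => φ z - φ' μ * (z - μ) - φ'' μ / 2 * (z - μ) ^ 2
          - φ''' μ / 6 * (z - μ) ^ 3 - φ'''' μ / 24 * (z - μ) ^ 4 + L / 120 * (z - μ) ^ 5)
        (f' := fun z => φ' z - φ'' μ * (z - μ) - φ''' μ / 2 * (z - μ) ^ 2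
          - φ'''' μ / 6 * (z - μ) ^ 3 + L / 24 * (z - μ) ^ 4 - φ' μ)
        (fun z hz => hdw_congr (((((((hderiv1 z (hSI hz)).mono hSI).sub
          (hd1 (φ' μ) μ z).hasDerivWithinAt).sub (hd2 (φ'' μ / 2) μ z).hasDerivWithinAt).sub
          (hd3 (φ''' μ / 6) μ z).hasDerivWithinAt).sub
          (hd4 (φ'''' μ / 24) μ z).hasDerivWithinAt).add
          (hd5 (L/120) μ z).hasDerivWithinAt) (by ring))
        (fun z hz => by have := key1 z hz; linarith)
        hμS hxS hμx
      simpa using this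
    rw [abs_of_nonneg (by linarith : (0:ℝ) ≤ x - μ)]
    linarith
  · -- case x ≤ μ
    set S : Set ℝ := I ∩ Set.Icc x μ with hS
    have hSc : Convex ℝ S := hIc.inter (convex_Icc x μ)
    have hSI : S ⊆ I := Set.inter_subset_left
    have hμS : μ ∈ S := ⟨hμI, Set.right_mem_Icc.2 hxμ⟩
    have hxS : x ∈ S := ⟨hx, Set.left_mem_Icc.2 hxμ⟩
    have key4 : ∀ y ∈ S, φ'''' μ ≤ φ'''' y - L * (y - μ) := by
      intro y hy
      have := anti_aux hSc (f := fun z => φ'''' z - L * (z - μ))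
        (f' := fun z => φ''''' z - L)
        (fun z hz => ((hderiv5 z (hSI hz)).mono hSI).sub (hd1 L μ z).hasDerivWithinAt)
        (fun z hz => by have := abs_le.mp (hL z (hSI hz)); linarith)
        hy hμS hy.2.2
      simpa using this
    have key3 : ∀ y ∈ S, φ''' y - φ'''' μ * (y - μ) - L / 2 * (y - μ) ^ 2 ≤ φ''' μ := by
      intro y hy
      have := mono_aux hSc (f := fun z => φ''' z - φ'''' μ * (z - μ) - L / 2 * (z - μ) ^ 2)
        (f' := fun z => φ'''' z - L * (z - μ) - φ'''' μ)
        (fun z hz => hdw_congr ((((hderiv4 z (hSI hz)).mono hSI).sub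
          (hd1 (φ'''' μ) μ z).hasDerivWithinAt).sub (hd2 (L/2) μ z).hasDerivWithinAt) (by ring))
        (fun z hz => by have := key4 z hz; linarith)
        hy hμS hy.2.2
      simpa using this
    have key2 : ∀ y ∈ S, φ'' μ ≤ φ'' y - φ''' μ * (y - μ) - φ'''' μ / 2 * (y - μ) ^ 2
        - L / 6 * (y - μ) ^ 3 := by
      intro y hy
      have := anti_aux hSc
        (f := fun z => φ'' z - φ''' μ * (z - μ) - φ'''' μ / 2 * (z - μ) ^ 2 - L / 6 * (z - μ) ^ 3)
        (f' := fun z => φ''' z - φ'''' μ * (z - μ) - L / 2 * (z - μ) ^ 2 - φ''' μ)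
        (fun z hz => hdw_congr (((((hderiv3 z (hSI hz)).mono hSI).sub
          (hd1 (φ''' μ) μ z).hasDerivWithinAt).sub (hd2 (φ'''' μ / 2) μ z).hasDerivWithinAt).sub
          (hd3 (L/6) μ z).hasDerivWithinAt) (by ring))
        (fun z hz => by have := key3 z hz; linarith)
        hy hμS hy.2.2
      simpa using this
    have key1 : ∀ y ∈ S, φ' y - φ'' μ * (y - μ) - φ''' μ / 2 * (y - μ) ^ 2
        - φ'''' μ / 6 * (y - μ) ^ 3 - L / 24 * (y - μ) ^ 4 ≤ φ' μ := by
      intro y hy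
      have := mono_aux hSc
        (f := fun z => φ' z - φ'' μ * (z - μ) - φ''' μ / 2 * (z - μ) ^ 2
          - φ'''' μ / 6 * (z - μ) ^ 3 - L / 24 * (z - μ) ^ 4)
        (f' := fun z => φ'' z - φ''' μ * (z - μ) - φ'''' μ / 2 * (z - μ) ^ 2
          - L / 6 * (z - μ) ^ 3 - φ'' μ)
        (fun z hz => hdw_congr ((((((hderiv2 z (hSI hz)).mono hSI).sub
          (hd1 (φ'' μ) μ z).hasDerivWithinAt).sub (hd2 (φ''' μ / 2) μ z).hasDerivWithinAt).sub
          (hd3 (φ'''' μ / 6) μ z).hasDerivWithinAt).sub (hd4 (L/24) μ z).hasDerivWithinAt) (by ring))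
        (fun z hz => by have := key2 z hz; linarith)
        hy hμS hy.2.2
      simpa using this
    have key0 : φ μ ≤ φ x - φ' μ * (x - μ) - φ'' μ / 2 * (x - μ) ^ 2
        - φ''' μ / 6 * (x - μ) ^ 3 - φ'''' μ / 24 * (x - μ) ^ 4 - L / 120 * (x - μ) ^ 5 := by
      have := anti_aux hSc
        (f := fun z => φ z - φ' μ * (z - μ) - φ'' μ / 2 * (z - μ) ^ 2
          - φ''' μ / 6 * (z - μ) ^ 3 - φ'''' μ / 24 * (z - μ) ^ 4 - L / 120 * (z - μ) ^ 5)
        (f' := fun z => φ' z - φ'' μ * (z - μ) - φ''' μ / 2 * (z - μ) ^ 2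
          - φ'''' μ / 6 * (z - μ) ^ 3 - L / 24 * (z - μ) ^ 4 - φ' μ)
        (fun z hz => hdw_congr (((((((hderiv1 z (hSI hz)).mono hSI).sub
          (hd1 (φ' μ) μ z).hasDerivWithinAt).sub (hd2 (φ'' μ / 2) μ z).hasDerivWithinAt).sub
          (hd3 (φ''' μ / 6) μ z).hasDerivWithinAt).sub
          (hd4 (φ'''' μ / 24) μ z).hasDerivWithinAt).sub
          (hd5 (L/120) μ z).hasDerivWithinAt) (by ring))
        (fun z hz => by have := key1 z hz; linarith)
        hxS hμS hxμ
      simpa using this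
    have habs : |x - μ| ^ 5 = -((x - μ) ^ 5) := by
      rw [abs_of_nonpos (by linarith : x - μ ≤ 0)]; ring
    rw [habs]
    linarith

/-- **Signed refinement of Jensen's inequality with skewness.**
Under the fourth-order expansion hypotheses, if `φ'''(μ)·E[(X−μ)³] ≥ 0` and the
kurtosis term dominates the fifth-order remainder, then
`E[φ(X)] ≥ φ(μ) + (φ''(μ)/2)E[(X−μ)²] + (φ'''(μ)/6)E[(X−μ)³]`. -/
theorem signed_refinement
    {Ω : Type*} [MeasureSpace Ω] [IsProbabilityMeasure (ℙ : Measure Ω)]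
    (I : Set ℝ) (hI : I.OrdConnected)
    (φ φ' φ'' φ''' φ'''' φ''''' : ℝ → ℝ) (L : ℝ)
    (hderiv1 : ∀ x ∈ I, HasDerivWithinAt φ (φ' x) I x)
    (hderiv2 : ∀ x ∈ I, HasDerivWithinAt φ' (φ'' x) I x)
    (hderiv3 : ∀ x ∈ I, HasDerivWithinAt φ'' (φ''' x) I x)
    (hderiv4 : ∀ x ∈ I, HasDerivWithinAt φ''' (φ'''' x) I x)
    (hderiv5 : ∀ x ∈ I, HasDerivWithinAt φ'''' (φ''''' x) I x)
    (hL : ∀ x ∈ I, |φ''''' x| ≤ L)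
    (X : Ω → ℝ) (hXI : ∀ ω, X ω ∈ I)
    (hXint : Integrable X) (hφXint : Integrable (fun ω => φ (X ω)))
    (μ : ℝ) (hμ : μ = ∫ ω, X ω)
    (hm2 : Integrable (fun ω => (X ω - μ) ^ 2))
    (hm3 : Integrable (fun ω => (X ω - μ) ^ 3))
    (hm4 : Integrable (fun ω => (X ω - μ) ^ 4))
    (hm5 : Integrable (fun ω => |X ω - μ| ^ 5))
    (hskew : 0 ≤ φ''' μ * ∫ ω, (X ω - μ) ^ 3)
    (hkurt : L / 120 * (∫ ω, |X ω - μ| ^ 5) ≤ φ'''' μ / 24 * ∫ ω, (X ω - μ) ^ 4) :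
    φ μ + φ'' μ / 2 * (∫ ω, (X ω - μ) ^ 2) + φ''' μ / 6 * (∫ ω, (X ω - μ) ^ 3) ≤
      ∫ ω, φ (X ω) := by
  have hXμint : Integrable (fun ω => X ω - μ) := hXint.sub (integrable_const μ)
  have hint0 : ∫ ω, (X ω - μ) = 0 := by
    rw [integral_sub hXint (integrable_const μ), integral_const]
    simp [hμ]
  have hne : (MeasureTheory.ae (ℙ : Measure Ω)).NeBot :=
    ae_neBot.2 (IsProbabilityMeasure.ne_zero ℙ)
  have c₁ : ∃ ω, X ω ≤ μ := by
    by_contra h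
    push_neg at h
    have h0 : (fun ω => X ω - μ) =ᵐ[ℙ] 0 :=
      (integral_eq_zero_iff_of_nonneg (fun ω => by have := (h ω).le; simpa using this)
        hXμint).mp hint0
    obtain ⟨ω, hω⟩ := h0.exists
    have := h ω
    simp only [Pi.zero_apply, sub_eq_zero] at hω
    exact absurd hω (ne_of_gt this)
  have c₂ : ∃ ω, μ ≤ X ω := by
    by_contra h
    push_neg at h
    have hint0' : ∫ ω, (μ - X ω) = 0 := by
      rw [integral_sub (integrable_const μ) hXint, integral_const]
      simp [hμ]
    have h0 : (fun ω => μ - X ω) =ᵐ[ℙ] 0 :=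
      (integral_eq_zero_iff_of_nonneg (fun ω => by have := (h ω).le; simpa using this)
        ((integrable_const μ).sub hXint)).mp hint0'
    obtain ⟨ω, hω⟩ := h0.exists
    have := h ω
    simp only [Pi.zero_apply, sub_eq_zero] at hω
    exact absurd hω (ne_of_gt this)
  obtain ⟨ω₁, hω₁⟩ := c₁
  obtain ⟨ω₂, hω₂⟩ := c₂
  have hμI : μ ∈ I := hI.out (hXI ω₁) (hXI ω₂) ⟨hω₁, hω₂⟩
  have pw : ∀ ω, φ μ + φ' μ * (X ω - μ) + φ'' μ / 2 * (X ω - μ) ^ 2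
      + φ''' μ / 6 * (X ω - μ) ^ 3 + φ'''' μ / 24 * (X ω - μ) ^ 4
      - L / 120 * |X ω - μ| ^ 5 ≤ φ (X ω) :=
    fun ω => taylor5_lb I hI φ φ' φ'' φ''' φ'''' φ''''' L hderiv1 hderiv2 hderiv3 hderiv4
      hderiv5 hL μ hμI (X ω) (hXI ω)
  have hc : Integrable (fun _ : Ω => φ μ) := integrable_const _
  have i1 : Integrable (fun ω => φ' μ * (X ω - μ)) := hXμint.const_mul _
  have i2 : Integrable (fun ω => φ'' μ / 2 * (X ω - μ) ^ 2) := hm2.const_mul _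
  have i3 : Integrable (fun ω => φ''' μ / 6 * (X ω - μ) ^ 3) := hm3.const_mul _
  have i4 : Integrable (fun ω => φ'''' μ / 24 * (X ω - μ) ^ 4) := hm4.const_mul _
  have i5 : Integrable (fun ω => L / 120 * |X ω - μ| ^ 5) := hm5.const_mul _
  have j2 : Integrable (fun ω => φ μ + φ' μ * (X ω - μ)) := hc.add i1
  have j3 : Integrable (fun ω => φ μ + φ' μ * (X ω - μ) + φ'' μ / 2 * (X ω - μ) ^ 2) := j2.add i2
  have j4 : Integrable (fun ω => φ μ + φ' μ * (X ω - μ) + φ'' μ / 2 * (X ω - μ) ^ 2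
      + φ''' μ / 6 * (X ω - μ) ^ 3) := j3.add i3
  have j5 : Integrable (fun ω => φ μ + φ' μ * (X ω - μ) + φ'' μ / 2 * (X ω - μ) ^ 2
      + φ''' μ / 6 * (X ω - μ) ^ 3 + φ'''' μ / 24 * (X ω - μ) ^ 4) := j4.add i4
  have hlow : Integrable (fun ω => φ μ + φ' μ * (X ω - μ) + φ'' μ / 2 * (X ω - μ) ^ 2
      + φ''' μ / 6 * (X ω - μ) ^ 3 + φ'''' μ / 24 * (X ω - μ) ^ 4
      - L / 120 * |X ω - μ| ^ 5) :=
    j5.sub i5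
  have hle := integral_mono hlow hφXint pw
  rw [integral_sub j5 i5,
    integral_add j4 i4,
    integral_add j3 i3,
    integral_add j2 i2,
    integral_add hc i1,
    integral_const, integral_const_mul, integral_const_mul, integral_const_mul,
    integral_const_mul, integral_const_mul, hint0] at hle
  simp only [measure_univ, probReal_univ, ENNReal.toReal_one, smul_eq_mul, one_mul, mul_zero, add_zero] at hle
  linarith
end

section
/- Let f, g : [a,b] → ℝ be integrable functions such that γ ≤ f(t) ≤ Γ and δ ≤ g(t) ≤ Δ for almost every t ∈ [a,b]. Then |T(f,g)| ≤ (1/4)·(Γ − γ)·(Δ − δ), where T(f,g) = (1/(b−a))·∫_a^b f(t)g(t) dt − ( (1/(b−a))·∫_a^b f(t) dt )·( (1/(b−a))·∫_a^b g(t) dt ). -/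
open MeasureTheory

/-- Cauchy–Schwarz inequality for integrals. -/
lemma gruss_cs {α : Type*} [MeasurableSpace α] {μ : Measure α}
    {F G : α → ℝ} (hF : MemLp F 2 μ) (hG : MemLp G 2 μ) :
    |∫ t, F t * G t ∂μ| ≤
      Real.sqrt (∫ t, F t ^ 2 ∂μ) * Real.sqrt (∫ t, G t ^ 2 ∂μ) := by
  have hpq : Real.HolderConjugate 2 2 := Real.holderConjugate_iff.mpr ⟨one_lt_two, by norm_num⟩
  have hF' : MemLp F (ENNReal.ofReal 2) μ := by
    simpa [ENNReal.ofReal_ofNat] using hF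
  have hG' : MemLp G (ENNReal.ofReal 2) μ := by
    simpa [ENNReal.ofReal_ofNat] using hG
  have h1 : |∫ t, F t * G t ∂μ| ≤ ∫ t, ‖F t‖ * ‖G t‖ ∂μ := by
    calc |∫ t, F t * G t ∂μ| = ‖∫ t, F t * G t ∂μ‖ := (Real.norm_eq_abs _).symm
    _ ≤ ∫ t, ‖F t * G t‖ ∂μ := norm_integral_le_integral_norm _
    _ = ∫ t, ‖F t‖ * ‖G t‖ ∂μ := by
        refine integral_congr_ae (Filter.Eventually.of_forall fun t => ?_)
        simp [abs_mul, Real.norm_eq_abs]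
  have h2 := MeasureTheory.integral_mul_norm_le_Lp_mul_Lq hpq hF' hG'
  have hFsq : ∫ t, ‖F t‖ ^ (2 : ℝ) ∂μ = ∫ t, F t ^ 2 ∂μ := by
    refine integral_congr_ae (Filter.Eventually.of_forall fun t => ?_)
    show ‖F t‖ ^ (2 : ℝ) = F t ^ 2
    rw [show ((2:ℝ)) = ((2:ℕ):ℝ) by norm_num, Real.rpow_natCast]
    simp [Real.norm_eq_abs, sq_abs]
  have hGsq : ∫ t, ‖G t‖ ^ (2 : ℝ) ∂μ = ∫ t, G t ^ 2 ∂μ := by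
    refine integral_congr_ae (Filter.Eventually.of_forall fun t => ?_)
    show ‖G t‖ ^ (2 : ℝ) = G t ^ 2
    rw [show ((2:ℝ)) = ((2:ℕ):ℝ) by norm_num, Real.rpow_natCast]
    simp [Real.norm_eq_abs, sq_abs]
  rw [hFsq, hGsq] at h2
  calc |∫ t, F t * G t ∂μ| ≤ ∫ t, ‖F t‖ * ‖G t‖ ∂μ := h1
    _ ≤ (∫ t, F t ^ 2 ∂μ) ^ ((1:ℝ)/2) * (∫ t, G t ^ 2 ∂μ) ^ ((1:ℝ)/2) := h2
    _ = Real.sqrt (∫ t, F t ^ 2 ∂μ) * Real.sqrt (∫ t, G t ^ 2 ∂μ) := by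
        rw [Real.sqrt_eq_rpow, Real.sqrt_eq_rpow]

/-- Variance bound: a centered function bounded in `[γ, Γ]` a.e. satisfies
`∫ h² ≤ μ(univ) · ((Γ-γ)/2)²`. -/
lemma gruss_var {α : Type*} [MeasurableSpace α] {μ : Measure α} [IsFiniteMeasure μ]
    {h : α → ℝ} (hh : Integrable h μ) (hh2 : Integrable (fun t => h t * h t) μ)
    {γ Γ : ℝ} (hbd : ∀ᵐ t ∂μ, γ ≤ h t ∧ h t ≤ Γ) (hzero : ∫ t, h t ∂μ = 0) :
    ∫ t, h t * h t ∂μ ≤ (μ Set.univ).toReal * ((Γ - γ) / 2) ^ 2 := by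
  set c : ℝ := (μ Set.univ).toReal with hc
  have hc0 : 0 ≤ c := ENNReal.toReal_nonneg
  have hnn : 0 ≤ ∫ t, (Γ - h t) * (h t - γ) ∂μ := by
    refine integral_nonneg_of_ae ?_
    filter_upwards [hbd] with t ht
    exact mul_nonneg (sub_nonneg.2 ht.2) (sub_nonneg.2 ht.1)
  have hexp : ∫ t, (Γ - h t) * (h t - γ) ∂μ
      = (Γ + γ) * (∫ t, h t ∂μ) - (c * (Γ * γ) + ∫ t, h t * h t ∂μ) := by
    have heq : (fun t => (Γ - h t) * (h t - γ))
        = fun t => (Γ + γ) * h t - (Γ * γ + h t * h t) := by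
      funext t; ring
    have hi1 : Integrable (fun t => Γ * γ + h t * h t) μ := (integrable_const _).add hh2
    rw [heq, integral_sub (hh.const_mul _) hi1,
      integral_add (integrable_const _) hh2, integral_const_mul, integral_const,
      smul_eq_mul, measureReal_def]
  rw [hexp, hzero] at hnn
  nlinarith [mul_nonneg hc0 (sq_nonneg (Γ + γ))]

/-- **The Grüss inequality.**
For integrable `f, g : [a,b] → ℝ` with `γ ≤ f ≤ Γ` and `δ ≤ g ≤ Δ` almost everywhere on
`[a,b]`, the Chebysev functional satisfies `|T(f,g)| ≤ (1/4)·(Γ − γ)·(Δ − δ)`. -/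
theorem gruss_inequality
    (a b : ℝ) (hab : a < b)
    (f g : ℝ → ℝ)
    (hf : IntegrableOn f (Set.Icc a b))
    (hg : IntegrableOn g (Set.Icc a b))
    (hfg : IntegrableOn (fun t => f t * g t) (Set.Icc a b))
    (γ Γ δ Δ : ℝ)
    (hfbd : ∀ᵐ t ∂(volume.restrict (Set.Icc a b)), γ ≤ f t ∧ f t ≤ Γ)
    (hgbd : ∀ᵐ t ∂(volume.restrict (Set.Icc a b)), δ ≤ g t ∧ g t ≤ Δ) :
    |1 / (b - a) * (∫ t in a..b, f t * g t) -
        (1 / (b - a) * ∫ t in a..b, f t) * (1 / (b - a) * ∫ t in a..b, g t)| ≤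
      1 / 4 * (Γ - γ) * (Δ - δ) := by
  have hba : (0:ℝ) < b - a := sub_pos.2 hab
  set μ : Measure ℝ := volume.restrict (Set.Icc a b) with hμ
  have hfin : IsFiniteMeasure μ := by
    constructor
    rw [hμ, Measure.restrict_apply_univ, Real.volume_Icc]
    exact ENNReal.ofReal_lt_top
  have hcuniv : (μ Set.univ).toReal = b - a := by
    rw [hμ, Measure.restrict_apply_univ, Real.volume_Icc, ENNReal.toReal_ofReal hba.le]
  have hμne : μ ≠ 0 := by
    intro h0
    have := hcuniv
    rw [h0] at this
    simp at this
    linarith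
  -- interval integrals equal integrals over μ
  have hconv : ∀ (h : ℝ → ℝ), ∫ t in a..b, h t = ∫ t, h t ∂μ := fun h => by
    rw [intervalIntegral.integral_of_le hab.le, hμ,
      MeasureTheory.integral_Icc_eq_integral_Ioc]
  have hf' : Integrable f μ := hf
  have hg' : Integrable g μ := hg
  have hfg' : Integrable (fun t => f t * g t) μ := hfg
  set mf : ℝ := 1 / (b - a) * ∫ t in a..b, f t with hmf
  set mg : ℝ := 1 / (b - a) * ∫ t in a..b, g t with hmg
  have hIf : ∫ t, f t ∂μ = (b - a) * mf := by
    rw [hmf, ← hconv f]; field_simp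
  have hIg : ∫ t, g t ∂μ = (b - a) * mg := by
    rw [hmg, ← hconv g]; field_simp
  set F : ℝ → ℝ := fun t => f t - mf with hF
  set G : ℝ → ℝ := fun t => g t - mg with hG
  have hF' : Integrable F μ := hf'.sub (integrable_const mf)
  have hG' : Integrable G μ := hg'.sub (integrable_const mg)
  have hFzero : ∫ t, F t ∂μ = 0 := by
    rw [hF]
    rw [integral_sub hf' (integrable_const mf), integral_const, smul_eq_mul, measureReal_def, hcuniv, hIf]
    ring
  have hGzero : ∫ t, G t ∂μ = 0 := by
    rw [hG]
    rw [integral_sub hg' (integrable_const mg), integral_const, smul_eq_mul, measureReal_def, hcuniv, hIg]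
    ring
  -- boundedness of F and G
  have hFbd : ∀ᵐ t ∂μ, γ - mf ≤ F t ∧ F t ≤ Γ - mf := by
    filter_upwards [hfbd] with t ht
    exact ⟨sub_le_sub_right ht.1 mf, sub_le_sub_right ht.2 mf⟩
  have hGbd : ∀ᵐ t ∂μ, δ - mg ≤ G t ∧ G t ≤ Δ - mg := by
    filter_upwards [hgbd] with t ht
    exact ⟨sub_le_sub_right ht.1 mg, sub_le_sub_right ht.2 mg⟩
  have hFmem : MemLp F 2 μ := by
    refine MemLp.of_bound hF'.aestronglyMeasurable (max |γ - mf| |Γ - mf|) ?_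
    filter_upwards [hFbd] with t ht
    rw [Real.norm_eq_abs]
    exact abs_le_max_abs_abs ht.1 ht.2
  have hGmem : MemLp G 2 μ := by
    refine MemLp.of_bound hG'.aestronglyMeasurable (max |δ - mg| |Δ - mg|) ?_
    filter_upwards [hGbd] with t ht
    rw [Real.norm_eq_abs]
    exact abs_le_max_abs_abs ht.1 ht.2
  have hFF : Integrable (fun t => F t * F t) μ := by
    have := hFmem.integrable_sq
    simpa [sq] using this
  have hGG : Integrable (fun t => G t * G t) μ := by
    have := hGmem.integrable_sq
    simpa [sq] using this
  -- variance bounds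
  have hFvar : ∫ t, F t * F t ∂μ ≤ (b - a) * ((Γ - γ) / 2) ^ 2 := by
    have := gruss_var hF' hFF hFbd hFzero
    rw [hcuniv] at this
    have heq : ((Γ - mf) - (γ - mf)) / 2 = (Γ - γ) / 2 := by ring
    rwa [heq] at this
  have hGvar : ∫ t, G t * G t ∂μ ≤ (b - a) * ((Δ - δ) / 2) ^ 2 := by
    have := gruss_var hG' hGG hGbd hGzero
    rw [hcuniv] at this
    have heq : ((Δ - mg) - (δ - mg)) / 2 = (Δ - δ) / 2 := by ring
    rwa [heq] at this
  -- Γ ≥ γ and Δ ≥ δ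
  haveI hne : (ae μ).NeBot := ae_neBot.mpr hμne
  have hγΓ : γ ≤ Γ := by
    obtain ⟨t, ht⟩ := hfbd.exists
    linarith [ht.1, ht.2]
  have hδΔ : δ ≤ Δ := by
    obtain ⟨t, ht⟩ := hgbd.exists
    linarith [ht.1, ht.2]
  -- key identity
  have hkey : 1 / (b - a) * (∫ t in a..b, f t * g t) - mf * mg
      = 1 / (b - a) * ∫ t, F t * G t ∂μ := by
    have hexp : (fun t => F t * G t)
        = fun t => (f t * g t - mf * g t) - (mg * f t - mf * mg) := by
      funext t; rw [hF, hG]; ring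
    have hint : ∫ t, F t * G t ∂μ
        = ((∫ t, f t * g t ∂μ) - mf * ∫ t, g t ∂μ)
          - (mg * (∫ t, f t ∂μ) - (b - a) * (mf * mg)) := by
      have hi1 : Integrable (fun t => f t * g t - mf * g t) μ := hfg'.sub (hg'.const_mul mf)
      have hi2 : Integrable (fun t => mg * f t - mf * mg) μ :=
        (hf'.const_mul mg).sub (integrable_const _)
      have hi3 : Integrable (fun t => mf * g t) μ := hg'.const_mul mf
      have hi4 : Integrable (fun t => mg * f t) μ := hf'.const_mul mg
      rw [hexp, integral_sub hi1 hi2, integral_sub hfg' hi3,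
        integral_sub hi4 (integrable_const _),
        integral_const_mul, integral_const_mul, integral_const, smul_eq_mul, measureReal_def, hcuniv]
    rw [hint, hIf, hIg, ← hconv fun t => f t * g t]
    field_simp
    ring
  rw [hkey]
  -- Cauchy–Schwarz
  have hCS := gruss_cs hFmem hGmem
  have hsqF : Real.sqrt (∫ t, F t ^ 2 ∂μ) ≤ Real.sqrt (b - a) * ((Γ - γ) / 2) := by
    have h1 : ∫ t, F t ^ 2 ∂μ ≤ (b - a) * ((Γ - γ) / 2) ^ 2 := by
      simpa [sq] using hFvar
    calc Real.sqrt (∫ t, F t ^ 2 ∂μ) ≤ Real.sqrt ((b - a) * ((Γ - γ) / 2) ^ 2) :=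
          Real.sqrt_le_sqrt h1
      _ = Real.sqrt (b - a) * ((Γ - γ) / 2) := by
          rw [Real.sqrt_mul hba.le, Real.sqrt_sq (by linarith)]
  have hsqG : Real.sqrt (∫ t, G t ^ 2 ∂μ) ≤ Real.sqrt (b - a) * ((Δ - δ) / 2) := by
    have h1 : ∫ t, G t ^ 2 ∂μ ≤ (b - a) * ((Δ - δ) / 2) ^ 2 := by
      simpa [sq] using hGvar
    calc Real.sqrt (∫ t, G t ^ 2 ∂μ) ≤ Real.sqrt ((b - a) * ((Δ - δ) / 2) ^ 2) :=
          Real.sqrt_le_sqrt h1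
      _ = Real.sqrt (b - a) * ((Δ - δ) / 2) := by
          rw [Real.sqrt_mul hba.le, Real.sqrt_sq (by linarith)]
  have hprod : |∫ t, F t * G t ∂μ|
      ≤ (b - a) * (((Γ - γ) / 2) * ((Δ - δ) / 2)) := by
    calc |∫ t, F t * G t ∂μ|
        ≤ Real.sqrt (∫ t, F t ^ 2 ∂μ) * Real.sqrt (∫ t, G t ^ 2 ∂μ) := hCS
      _ ≤ (Real.sqrt (b - a) * ((Γ - γ) / 2)) * (Real.sqrt (b - a) * ((Δ - δ) / 2)) := by
          exact mul_le_mul hsqF hsqG (Real.sqrt_nonneg _)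
            (mul_nonneg (Real.sqrt_nonneg _) (by linarith))
      _ = (Real.sqrt (b - a) * Real.sqrt (b - a)) * (((Γ - γ) / 2) * ((Δ - δ) / 2)) := by
          ring
      _ = (b - a) * (((Γ - γ) / 2) * ((Δ - δ) / 2)) := by
          rw [Real.mul_self_sqrt hba.le]
  rw [abs_mul, abs_of_pos (by positivity : (0:ℝ) < 1 / (b - a))]
  calc 1 / (b - a) * |∫ t, F t * G t ∂μ|
      ≤ 1 / (b - a) * ((b - a) * (((Γ - γ) / 2) * ((Δ - δ) / 2))) := by
        apply mul_le_mul_of_nonneg_left hprod (by positivity)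
    _ = (Γ - γ) / 2 * ((Δ - δ) / 2) := by
        field_simp
    _ = 1 / 4 * (Γ - γ) * (Δ - δ) := by ring
end

section
/- Let φ : [a,b] → ℝ be convex, let x₁, …, xₙ ∈ [a,b], and let w₁, …, wₙ ≥ 0 with Σᵢ wᵢ = 1. Then φ( a + b − Σᵢ wᵢ xᵢ ) ≤ φ(a) + φ(b) − Σᵢ wᵢ φ(xᵢ). -/
lemma mercer_key (a b : ℝ) (hab : a ≤ b) (φ : ℝ → ℝ)
    (hconv : ConvexOn ℝ (Set.Icc a b) φ) (x : ℝ) (hx : x ∈ Set.Icc a b) :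
    φ (a + b - x) ≤ φ a + φ b - φ x := by
  obtain ⟨hax, hxb⟩ := hx
  rcases eq_or_lt_of_le hab with h | h
  · have hxa : x = a := le_antisymm (h ▸ hxb) hax
    have e : a + b - x = b := by rw [hxa]; ring
    rw [e, hxa, ← h]
    linarith
  · set t : ℝ := (b - x) / (b - a) with ht
    have hba : (0:ℝ) < b - a := by linarith
    have ht0 : 0 ≤ t := div_nonneg (by linarith) hba.le
    have ht1 : t ≤ 1 := by
      rw [div_le_one hba]; linarith
    have hxeq : t * a + (1 - t) * b = x := by
      have key : t * (b - a) = b - x := by rw [ht]; exact div_mul_cancel₀ _ hba.ne'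
      linear_combination (-1 : ℝ) * key
    have hyeq : (1 - t) * a + t * b = a + b - x := by
      have key : t * (b - a) = b - x := by rw [ht]; exact div_mul_cancel₀ _ hba.ne'
      linear_combination key
    have ha : a ∈ Set.Icc a b := ⟨le_refl _, hab⟩
    have hb : b ∈ Set.Icc a b := ⟨hab, le_refl _⟩
    have h1 := hconv.2 ha hb ht0 (by linarith : (0:ℝ) ≤ 1 - t) (by ring : t + (1 - t) = 1)
    have h2 := hconv.2 ha hb (by linarith : (0:ℝ) ≤ 1 - t) ht0 (by ring : (1 - t) + t = 1)
    simp only [smul_eq_mul] at h1 h2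
    rw [hxeq] at h1
    rw [hyeq] at h2
    linarith

/-- **The Jensen–Mercer inequality.**
For `φ` convex on `[a,b]`, points `x₁, …, xₙ ∈ [a,b]` and weights `wᵢ ≥ 0` summing to `1`,
`φ(a + b − Σᵢ wᵢ xᵢ) ≤ φ(a) + φ(b) − Σᵢ wᵢ φ(xᵢ)`. -/
theorem jensen_mercer
    (a b : ℝ) (hab : a ≤ b)
    (φ : ℝ → ℝ) (hconv : ConvexOn ℝ (Set.Icc a b) φ)
    (n : ℕ) (x : Fin n → ℝ) (hx : ∀ i, x i ∈ Set.Icc a b)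
    (w : Fin n → ℝ) (hw : ∀ i, 0 ≤ w i) (hw1 : ∑ i, w i = 1) :
    φ (a + b - ∑ i, w i * x i) ≤ φ a + φ b - ∑ i, w i * φ (x i) := by
  have hmem : ∀ i : Fin n, a + b - x i ∈ Set.Icc a b := by
    intro i
    obtain ⟨h1, h2⟩ := hx i
    exact ⟨by linarith, by linarith⟩
  have heq : a + b - ∑ i, w i * x i = ∑ i, w i • (a + b - x i) := by
    simp only [smul_eq_mul, mul_sub, Finset.sum_sub_distrib, ← Finset.sum_mul, hw1]
    ring
  have hjensen := hconv.map_sum_le (t := Finset.univ) (fun i _ => hw i)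
    (by simpa using hw1) (fun i _ => hmem i)
  rw [← heq] at hjensen
  have hsum : ∑ i, w i * φ (a + b - x i) ≤ ∑ i, w i * (φ a + φ b - φ (x i)) := by
    apply Finset.sum_le_sum
    intro i _
    exact mul_le_mul_of_nonneg_left (mercer_key a b hab φ hconv (x i) (hx i)) (hw i)
  have : ∑ i, w i * (φ a + φ b - φ (x i)) = φ a + φ b - ∑ i, w i * φ (x i) := by
    simp only [mul_sub, Finset.sum_sub_distrib, ← Finset.sum_mul, hw1]
    ring
  simp only [smul_eq_mul] at hjensen
  linarith
end

section
/- Let I ⊆ ℝ be an interval, let φ : ℝ → ℝ be convex and twice differentiable on I with φ''(x) ≥ m for all x ∈ I, and let X be a random variable taking values in I with mean μ, finite variance Var(X), and with E[φ(X)] and E[X·φ'(X)] finite. Then (m/2)·Var(X) ≤ E[φ(X)] − φ(μ) ≤ Cov(X, φ'(X)), where Cov(X, φ'(X)) = E[X·φ'(X)] − μ·E[φ'(X)]. -/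
open MeasureTheory ProbabilityTheory
open scoped ProbabilityTheory

/-- Tangent line lies below a convex function (derivative-within version). -/
lemma tangent_le_aux {S : Set ℝ} {f : ℝ → ℝ} {f'x x y : ℝ} (hf : ConvexOn ℝ S f)
    (hx : x ∈ S) (hy : y ∈ S) (hd : HasDerivWithinAt f f'x S x) :
    f'x * (y - x) ≤ f y - f x := by
  rcases lt_trichotomy x y with h | h | h
  · have h1 := hf.le_slope_of_hasDerivWithinAt hx hy h hd
    rw [slope_def_field] at h1
    have h2 : (0:ℝ) < y - x := by linarith
    rw [le_div_iff₀ h2] at h1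
    linarith
  · simp [h]
  · have h1 := hf.slope_le_of_hasDerivWithinAt hy hx h hd
    rw [slope_def_field] at h1
    have h2 : (0:ℝ) < x - y := by linarith
    rw [div_le_iff₀ h2] at h1
    nlinarith [h1]

/-- **Variance lower bound and covariance upper bound for the Jensen gap.**
If `φ` is convex and twice differentiable on the interval `I` with `φ'' ≥ m` on `I`, and
`X` takes values in `I` with mean `μ`, finite variance, and `E[φ(X)]`, `E[X·φ'(X)]` finite,
then `(m/2)·Var(X) ≤ E[φ(X)] − φ(μ) ≤ Cov(X, φ'(X)) = E[X·φ'(X)] − μ·E[φ'(X)]`. -/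
theorem jensen_gap_covariance_bounds
    {Ω : Type*} [MeasureSpace Ω] [IsProbabilityMeasure (ℙ : Measure Ω)]
    (I : Set ℝ) (hI : I.OrdConnected)
    (φ φ' φ'' : ℝ → ℝ) (m : ℝ)
    (hconv : ConvexOn ℝ I φ)
    (hderiv1 : ∀ x ∈ I, HasDerivWithinAt φ (φ' x) I x)
    (hderiv2 : ∀ x ∈ I, HasDerivWithinAt φ' (φ'' x) I x)
    (hstrong : ∀ x ∈ I, m ≤ φ'' x)
    (X : Ω → ℝ) (hXI : ∀ ω, X ω ∈ I)
    (hXint : Integrable X) (hφXint : Integrable (fun ω => φ (X ω)))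
    (hφ'Xint : Integrable (fun ω => φ' (X ω)))
    (hXφ'Xint : Integrable (fun ω => X ω * φ' (X ω)))
    (μ : ℝ) (hμ : μ = ∫ ω, X ω)
    (hvarint : Integrable (fun ω => (X ω - μ) ^ 2)) :
    m / 2 * (∫ ω, (X ω - μ) ^ 2) ≤ (∫ ω, φ (X ω)) - φ μ ∧
      (∫ ω, φ (X ω)) - φ μ ≤ (∫ ω, X ω * φ' (X ω)) - μ * ∫ ω, φ' (X ω) := by
  have hne : (MeasureTheory.ae (ℙ : Measure Ω)).NeBot :=
    ae_neBot.mpr (IsProbabilityMeasure.ne_zero _)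
  have hIconv : Convex ℝ I := hI.convex
  -- μ ∈ I
  have hμI : μ ∈ I := by
    have h1 : ∃ ω, X ω ≤ μ := by
      by_contra hc
      push_neg at hc
      have h0 : ∫ ω, (X ω - μ) = 0 := by
        rw [integral_sub hXint (integrable_const μ), integral_const]
        simp [hμ]
      have hz := (integral_eq_zero_iff_of_nonneg
        (fun ω => sub_nonneg.mpr (hc ω).le) (hXint.sub (integrable_const μ))).mp h0
      obtain ⟨ω, hω⟩ := hz.exists
      have : X ω - μ = 0 := hω
      have := hc ω
      linarith
    have h2 : ∃ ω, μ ≤ X ω := by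
      by_contra hc
      push_neg at hc
      have h0 : ∫ ω, (μ - X ω) = 0 := by
        rw [integral_sub (integrable_const μ) hXint, integral_const]
        simp [hμ]
      have hz := (integral_eq_zero_iff_of_nonneg
        (fun ω => sub_nonneg.mpr (hc ω).le) ((integrable_const μ).sub hXint)).mp h0
      obtain ⟨ω, hω⟩ := hz.exists
      have : μ - X ω = 0 := hω
      have := hc ω
      linarith
    obtain ⟨ω₁, hω₁⟩ := h1
    obtain ⟨ω₂, hω₂⟩ := h2
    exact hI.out (hXI ω₁) (hXI ω₂) ⟨hω₁, hω₂⟩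
  -- ψ = φ - (m/2) x^2 is convex on I
  have hψd1 : ∀ x ∈ I, HasDerivWithinAt (fun t => φ t - m / 2 * t ^ 2)
      (φ' x - m * x) I x := by
    intro x hx
    have h2 : HasDerivWithinAt (fun t : ℝ => m / 2 * t ^ 2) (m * x) I x := by
      have := ((hasDerivAt_pow 2 x).const_mul (m / 2)).hasDerivWithinAt (s := I)
      refine this.congr_deriv ?_
      norm_num
      ring
    exact (hderiv1 x hx).sub h2
  have hψd2 : ∀ x ∈ I, HasDerivWithinAt (fun t => φ' t - m * t)
      (φ'' x - m) I x := by
    intro x hx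
    exact (hderiv2 x hx).sub (((hasDerivAt_id x).const_mul m).hasDerivWithinAt.congr_deriv
      (by simp))
  have hψconv : ConvexOn ℝ I (fun t => φ t - m / 2 * t ^ 2) := by
    apply convexOn_of_hasDerivWithinAt2_nonneg hIconv
      (f' := fun t => φ' t - m * t) (f'' := fun t => φ'' t - m)
    · intro x hx
      exact (hψd1 x hx).continuousWithinAt
    · intro x hx
      exact ((hψd1 x (interior_subset hx)).mono interior_subset)
    · intro x hx
      exact ((hψd2 x (interior_subset hx)).mono interior_subset)
    · intro x hx
      have := hstrong x (interior_subset hx)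
      linarith
  -- pointwise lower bound
  have hlow : ∀ ω, φ μ + φ' μ * (X ω - μ) + m / 2 * (X ω - μ) ^ 2 ≤ φ (X ω) := by
    intro ω
    have := tangent_le_aux hψconv hμI (hXI ω) (hψd1 μ hμI)
    nlinarith [this]
  -- pointwise upper bound
  have hupp : ∀ ω, φ (X ω) - φ μ ≤ X ω * φ' (X ω) - μ * φ' (X ω) := by
    intro ω
    have := tangent_le_aux hconv (hXI ω) hμI (hderiv1 (X ω) (hXI ω))
    nlinarith [this]
  constructor
  · have hXμ : Integrable (fun ω => φ' μ * (X ω - μ)) := by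
      have := (hXint.sub (integrable_const μ)).const_mul (φ' μ)
      simpa [Pi.sub_apply] using this
    have hint : Integrable (fun ω => φ μ + φ' μ * (X ω - μ) + m / 2 * (X ω - μ) ^ 2) :=
      ((integrable_const (φ μ)).add hXμ).add (hvarint.const_mul (m / 2))
    have hmono := integral_mono hint hφXint hlow
    have hcalc : ∫ ω, (φ μ + φ' μ * (X ω - μ) + m / 2 * (X ω - μ) ^ 2) =
        φ μ + m / 2 * ∫ ω, (X ω - μ) ^ 2 := by
      have hA : Integrable (fun ω => φ μ + φ' μ * (X ω - μ)) := (integrable_const _).add hXμ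
      have hB : Integrable (fun ω => m / 2 * (X ω - μ) ^ 2) := hvarint.const_mul _
      have hC : Integrable (fun ω => X ω - μ) := hXint.sub (integrable_const μ)
      rw [integral_add hA hB, integral_add (integrable_const (φ μ)) hXμ,
        integral_const, integral_const_mul, integral_const_mul,
        integral_sub hXint (integrable_const μ), integral_const]
      simp [hμ]
    rw [hcalc] at hmono
    linarith
  · have hint : Integrable (fun ω => X ω * φ' (X ω) - μ * φ' (X ω)) :=
      hXφ'Xint.sub (hφ'Xint.const_mul μ)
    have hint2 : Integrable (fun ω => φ (X ω) - φ μ) := hφXint.sub (integrable_const _)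
    have hmono := integral_mono hint2 hint hupp
    rw [integral_sub hφXint (integrable_const _), integral_const,
      integral_sub hXφ'Xint (hφ'Xint.const_mul μ), integral_const_mul] at hmono
    simpa using hmono
end

section
/- Let X be a random variable taking values in [a,b] with mean μ = E[X] and variance σ², and let t > 0. Then e^{tμ} + (t²·e^{ta}/2)·σ² ≤ E[e^{tX}] ≤ e^{tμ} + (t²·e^{tb}/2)·σ². -/
open MeasureTheory ProbabilityTheory
open scoped ProbabilityTheory

lemma aux_lower (s u : ℝ) (hs0 : s ≤ 0) (hsu : s ≤ u) :
    Real.exp s * u ^ 2 / 2 ≤ Real.exp u - 1 - u := by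
  set g : ℝ → ℝ := fun x => Real.exp x - 1 - x - Real.exp s * x ^ 2 / 2 with hgdef
  set g' : ℝ → ℝ := fun x => Real.exp x - 1 - Real.exp s * x with hg'def
  have hder : ∀ x : ℝ, HasDerivAt g (g' x) x := by
    intro x
    have h1 : HasDerivAt (fun x : ℝ => Real.exp s * x ^ 2 / 2) (Real.exp s * x) x := by
      have := ((hasDerivAt_pow 2 x).const_mul (Real.exp s)).div_const 2
      exact this.congr_deriv (by ring)
    have h2 := ((Real.hasDerivAt_exp x).sub_const 1).sub (hasDerivAt_id x)
    have := h2.sub h1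
    exact this.congr_deriv (by simp only [hg'def])
  have hder' : ∀ x : ℝ, HasDerivAt g' (Real.exp x - Real.exp s) x := by
    intro x
    have := ((Real.hasDerivAt_exp x).sub_const 1).sub ((hasDerivAt_id x).const_mul (Real.exp s))
    exact this.congr_deriv (by ring)
  have hmono : MonotoneOn g' (Set.Ici s) := by
    apply monotoneOn_of_deriv_nonneg (convex_Ici s)
    · exact fun x _ => ((hder' x).continuousAt).continuousWithinAt
    · exact fun x _ => (hder' x).differentiableAt.differentiableWithinAt
    · intro x hx
      rw [interior_Ici] at hx
      rw [(hder' x).deriv]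
      have : Real.exp s ≤ Real.exp x := Real.exp_le_exp.mpr (le_of_lt hx)
      linarith
  have hg'0 : g' 0 = 0 := by simp [hg'def]
  have hg0 : g 0 = 0 := by simp [hgdef]
  have key : 0 ≤ g u := by
    rcases le_or_gt u 0 with hu | hu
    · have hanti : AntitoneOn g (Set.Icc s 0) := by
        apply antitoneOn_of_deriv_nonpos (convex_Icc s 0)
        · exact fun x _ => ((hder x).continuousAt).continuousWithinAt
        · exact fun x _ => (hder x).differentiableAt.differentiableWithinAt
        · intro x hx
          rw [interior_Icc] at hx
          rw [(hder x).deriv]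
          have : g' x ≤ g' 0 := hmono (le_of_lt hx.1) (Set.mem_Ici.mpr hs0) (le_of_lt hx.2)
          rw [hg'0] at this
          exact this
      have := hanti ⟨hsu, hu⟩ ⟨hs0, le_refl 0⟩ hu
      rw [hg0] at this
      exact this
    · have hmono2 : MonotoneOn g (Set.Ici 0) := by
        apply monotoneOn_of_deriv_nonneg (convex_Ici 0)
        · exact fun x _ => ((hder x).continuousAt).continuousWithinAt
        · exact fun x _ => (hder x).differentiableAt.differentiableWithinAt
        · intro x hx
          rw [interior_Ici] at hx
          rw [(hder x).deriv]
          have : g' 0 ≤ g' x := hmono (Set.mem_Ici.mpr hs0) (Set.mem_Ici.mpr (hs0.trans (le_of_lt hx))) (le_of_lt hx)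
          rw [hg'0] at this
          exact this
      have := hmono2 (Set.mem_Ici.mpr le_rfl) (Set.mem_Ici.mpr (le_of_lt hu)) (le_of_lt hu)
      rw [hg0] at this
      exact this
  simp only [hgdef] at key
  linarith

lemma aux_upper (r u : ℝ) (hr0 : 0 ≤ r) (hur : u ≤ r) :
    Real.exp u - 1 - u ≤ Real.exp r * u ^ 2 / 2 := by
  set g : ℝ → ℝ := fun x => Real.exp r * x ^ 2 / 2 + 1 + x - Real.exp x with hgdef
  set g' : ℝ → ℝ := fun x => Real.exp r * x + 1 - Real.exp x with hg'def
  have hder : ∀ x : ℝ, HasDerivAt g (g' x) x := by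
    intro x
    have h1 : HasDerivAt (fun x : ℝ => Real.exp r * x ^ 2 / 2) (Real.exp r * x) x := by
      have := ((hasDerivAt_pow 2 x).const_mul (Real.exp r)).div_const 2
      exact this.congr_deriv (by ring)
    have := (((h1.add_const 1).add (hasDerivAt_id x)).sub (Real.hasDerivAt_exp x))
    exact this.congr_deriv (by simp only [hg'def])
  have hder' : ∀ x : ℝ, HasDerivAt g' (Real.exp r - Real.exp x) x := by
    intro x
    have := (((hasDerivAt_id x).const_mul (Real.exp r)).add_const 1).sub (Real.hasDerivAt_exp x)
    exact this.congr_deriv (by ring)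
  have hmono : MonotoneOn g' (Set.Iic r) := by
    apply monotoneOn_of_deriv_nonneg (convex_Iic r)
    · exact fun x _ => ((hder' x).continuousAt).continuousWithinAt
    · exact fun x _ => (hder' x).differentiableAt.differentiableWithinAt
    · intro x hx
      rw [interior_Iic] at hx
      rw [(hder' x).deriv]
      have : Real.exp x ≤ Real.exp r := Real.exp_le_exp.mpr (le_of_lt hx)
      linarith
  have hg'0 : g' 0 = 0 := by simp [hg'def]
  have hg0 : g 0 = 0 := by simp [hgdef]
  have key : 0 ≤ g u := by
    rcases le_or_gt u 0 with hu | hu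
    · have hanti : AntitoneOn g (Set.Iic 0) := by
        apply antitoneOn_of_deriv_nonpos (convex_Iic 0)
        · exact fun x _ => ((hder x).continuousAt).continuousWithinAt
        · exact fun x _ => (hder x).differentiableAt.differentiableWithinAt
        · intro x hx
          rw [interior_Iic] at hx
          rw [(hder x).deriv]
          have : g' x ≤ g' 0 :=
            hmono (Set.mem_Iic.mpr ((le_of_lt hx).trans hr0)) (Set.mem_Iic.mpr hr0) (le_of_lt hx)
          rw [hg'0] at this
          exact this
      have := hanti (Set.mem_Iic.mpr hu) (Set.mem_Iic.mpr le_rfl) hu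
      rw [hg0] at this
      exact this
    · have hmono2 : MonotoneOn g (Set.Icc 0 r) := by
        apply monotoneOn_of_deriv_nonneg (convex_Icc 0 r)
        · exact fun x _ => ((hder x).continuousAt).continuousWithinAt
        · exact fun x _ => (hder x).differentiableAt.differentiableWithinAt
        · intro x hx
          rw [interior_Icc] at hx
          rw [(hder x).deriv]
          have : g' 0 ≤ g' x := hmono (Set.mem_Iic.mpr hr0) (Set.mem_Iic.mpr (le_of_lt hx.2)) (le_of_lt hx.1)
          rw [hg'0] at this
          exact this
      have := hmono2 ⟨le_rfl, hr0⟩ ⟨le_of_lt hu, hur⟩ (le_of_lt hu)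
      rw [hg0] at this
      exact this
  simp only [hgdef] at key
  linarith

/-- **Variance-refined bounds on the moment generating function.**
For a random variable `X` taking values in `[a,b]` with mean `μ` and variance `σ2`, and
`t > 0`, `e^{tμ} + (t²e^{ta}/2)·σ² ≤ E[e^{tX}] ≤ e^{tμ} + (t²e^{tb}/2)·σ²`. -/
theorem mgf_variance_bounds
    {Ω : Type*} [MeasureSpace Ω] [IsProbabilityMeasure (ℙ : Measure Ω)]
    (a b : ℝ) (hab : a ≤ b) (t : ℝ) (ht : 0 < t)
    (X : Ω → ℝ) (hXI : ∀ ω, X ω ∈ Set.Icc a b)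
    (hXint : Integrable X)
    (hmgf : Integrable (fun ω => Real.exp (t * X ω)))
    (μ : ℝ) (hμ : μ = ∫ ω, X ω)
    (hvarint : Integrable (fun ω => (X ω - μ) ^ 2))
    (σ2 : ℝ) (hσ2 : σ2 = ∫ ω, (X ω - μ) ^ 2) :
    Real.exp (t * μ) + t ^ 2 * Real.exp (t * a) / 2 * σ2 ≤ (∫ ω, Real.exp (t * X ω)) ∧
      (∫ ω, Real.exp (t * X ω)) ≤ Real.exp (t * μ) + t ^ 2 * Real.exp (t * b) / 2 * σ2 := by
  have hμa : a ≤ μ := by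
    rw [hμ]
    calc a = ∫ _ : Ω, a := by simp
    _ ≤ ∫ ω, X ω := integral_mono (integrable_const a) hXint fun ω => (hXI ω).1
  have hμb : μ ≤ b := by
    rw [hμ]
    calc (∫ ω, X ω) ≤ ∫ _ : Ω, b := integral_mono hXint (integrable_const b) fun ω => (hXI ω).2
    _ = b := by simp
  have hXsub : Integrable (fun ω => X ω - μ) := hXint.sub (integrable_const μ)
  have hintsub : (∫ ω, X ω - μ) = 0 := by
    rw [integral_sub hXint (integrable_const μ)]
    simp [← hμ]
  have hpt : ∀ ω, Real.exp (t * μ) + t * Real.exp (t * μ) * (X ω - μ)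
        + t ^ 2 * Real.exp (t * a) / 2 * (X ω - μ) ^ 2 ≤ Real.exp (t * X ω)
      ∧ Real.exp (t * X ω) ≤ Real.exp (t * μ) + t * Real.exp (t * μ) * (X ω - μ)
        + t ^ 2 * Real.exp (t * b) / 2 * (X ω - μ) ^ 2 := by
    intro ω
    have hXa := (hXI ω).1
    have hXb := (hXI ω).2
    have hs0 : t * (a - μ) ≤ 0 := mul_nonpos_of_nonneg_of_nonpos ht.le (by linarith)
    have hr0 : 0 ≤ t * (b - μ) := mul_nonneg ht.le (by linarith)
    have hsu : t * (a - μ) ≤ t * (X ω - μ) :=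
      mul_le_mul_of_nonneg_left (by linarith) ht.le
    have hur : t * (X ω - μ) ≤ t * (b - μ) :=
      mul_le_mul_of_nonneg_left (by linarith) ht.le
    have hpos : (0 : ℝ) < Real.exp (t * μ) := Real.exp_pos _
    have hlo := mul_le_mul_of_nonneg_left
      (aux_lower (t * (a - μ)) (t * (X ω - μ)) hs0 hsu) hpos.le
    have hhi := mul_le_mul_of_nonneg_left
      (aux_upper (t * (b - μ)) (t * (X ω - μ)) hr0 hur) hpos.le
    have e1 : Real.exp (t * X ω) = Real.exp (t * μ) * Real.exp (t * (X ω - μ)) := by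
      rw [← Real.exp_add]; ring_nf
    have e2 : Real.exp (t * a) = Real.exp (t * μ) * Real.exp (t * (a - μ)) := by
      rw [← Real.exp_add]; ring_nf
    have e3 : Real.exp (t * b) = Real.exp (t * μ) * Real.exp (t * (b - μ)) := by
      rw [← Real.exp_add]; ring_nf
    constructor
    · rw [e1, e2]; nlinarith [hlo]
    · rw [e1, e3]; nlinarith [hhi]
  have i1 : Integrable (fun ω => Real.exp (t * μ) + t * Real.exp (t * μ) * (X ω - μ)) :=
    (integrable_const _).add (hXsub.const_mul _)
  have i2a : Integrable (fun ω => t ^ 2 * Real.exp (t * a) / 2 * (X ω - μ) ^ 2) :=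
    hvarint.const_mul _
  have i2b : Integrable (fun ω => t ^ 2 * Real.exp (t * b) / 2 * (X ω - μ) ^ 2) :=
    hvarint.const_mul _
  have hintL : Integrable (fun ω => Real.exp (t * μ) + t * Real.exp (t * μ) * (X ω - μ)
      + t ^ 2 * Real.exp (t * a) / 2 * (X ω - μ) ^ 2) := i1.add i2a
  have hintU : Integrable (fun ω => Real.exp (t * μ) + t * Real.exp (t * μ) * (X ω - μ)
      + t ^ 2 * Real.exp (t * b) / 2 * (X ω - μ) ^ 2) := i1.add i2b
  have hIL : (∫ ω, (Real.exp (t * μ) + t * Real.exp (t * μ) * (X ω - μ)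
      + t ^ 2 * Real.exp (t * a) / 2 * (X ω - μ) ^ 2))
      = Real.exp (t * μ) + t ^ 2 * Real.exp (t * a) / 2 * σ2 := by
    rw [integral_add i1 i2a, integral_add (integrable_const _) (hXsub.const_mul _),
      integral_const_mul, integral_const_mul, hintsub]
    simp [hσ2]
  have hIU : (∫ ω, (Real.exp (t * μ) + t * Real.exp (t * μ) * (X ω - μ)
      + t ^ 2 * Real.exp (t * b) / 2 * (X ω - μ) ^ 2))
      = Real.exp (t * μ) + t ^ 2 * Real.exp (t * b) / 2 * σ2 := by
    rw [integral_add i1 i2b, integral_add (integrable_const _) (hXsub.const_mul _),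
      integral_const_mul, integral_const_mul, hintsub]
    simp [hσ2]
  constructor
  · rw [← hIL]
    exact integral_mono hintL hmgf fun ω => (hpt ω).1
  · rw [← hIU]
    exact integral_mono hmgf hintU fun ω => (hpt ω).2
end
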